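/- arXiv:2108.03210 — 4 statements merged into one kernel-verified Lean document; each statement's English description precedes it below -/
import Mathlib

section
/- Let T satisfy Assumption (X), let S be a canonical loss function for T, let x̂₁,…,x̂ₙ be the T-PAV output for data (x₁,y₁),…,(xₙ,yₙ) with x₁ ≤ … ≤ xₙ, and suppose all empirical score terms are finite. Suppose there exists a constant ĉ ∈ ℝ such that the empirical measure of (x₁+ĉ, y₁),…,(xₙ+ĉ, yₙ) is unconditionally T-calibrated, and the terms in Ŝ_urc = (1/n)Σ S(xᵢ+ĉ, yᵢ) are finite. Then MCB̂ = Ŝ − Ŝ_rc satisfies MCB̂ = MCB̂_u + MCB̂_c, where MCB̂_u = Ŝ − Ŝ_urc ≥ 0 and MCB̂_c = Ŝ_urc − Ŝ_rc ≥ 0. -/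
open MeasureTheory ProbabilityTheory

noncomputable section

/-- The cumulative distribution function of a measure `G` on `ℝ`, evaluated at `y`. -/
def cdfAt (G : Measure ℝ) (y : ℝ) : ℝ := (G (Set.Iic y)).toReal

/-- The left limit `G(y−)` of the CDF of `G` at `y`. -/
def cdfLt (G : Measure ℝ) (y : ℝ) : ℝ := (G (Set.Iio y)).toReal

/-- The lower `α`-quantile `q_α^-(G) = inf {x : G(x) ≥ α}`. -/
def lowerQuantile (G : Measure ℝ) (α : ℝ) : ℝ := sInf {x : ℝ | α ≤ cdfAt G x}

/-- The upper `α`-quantile `q_α^+(G) = sup {x : G(x−) ≤ α}`. -/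
def upperQuantile (G : Measure ℝ) (α : ℝ) : ℝ := sSup {x : ℝ | cdfLt G x ≤ α}

variable {Ω : Type*} [MeasurableSpace Ω]

/-- The (randomized) probability integral transform `Z_F = F(Y−) + U (F(Y) − F(Y−))`. -/
def PIT (F : Ω → Measure ℝ) (Y U : Ω → ℝ) (ω : Ω) : ℝ :=
  cdfLt (F ω) (Y ω) + U ω * (cdfAt (F ω) (Y ω) - cdfLt (F ω) (Y ω))

/-- The uniform distribution on `[0,1]`. -/
def unif01 : Measure ℝ := volume.restrict (Set.Icc (0:ℝ) 1)

/-- A prediction space: a probability space carrying a random probability measure `F` on `ℝ`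
(the predictive distribution), an outcome `Y`, and a uniform random variable `U` that is
independent of the σ-algebra generated by `F` and `Y`. -/
structure IsPredictionSpace (μ : Measure Ω) (F : Ω → Measure ℝ) (Y U : Ω → ℝ) : Prop where
  isProb : IsProbabilityMeasure μ
  probF : ∀ ω, IsProbabilityMeasure (F ω)
  measF : Measurable F
  measY : Measurable Y
  measU : Measurable U
  unifU : μ.map U = unif01
  indepU : Indep (MeasurableSpace.comap U inferInstance)
    (MeasurableSpace.comap F inferInstance ⊔ MeasurableSpace.comap Y inferInstance) μ

/-- `F` is auto-calibrated: `F(y) = Q(Y ≤ y | σ(F))` a.s. for every `y`. -/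
def AutoCalibrated (μ : Measure Ω) (F : Ω → Measure ℝ) (Y : Ω → ℝ) : Prop :=
  ∀ y : ℝ, (fun ω => cdfAt (F ω) y)
    =ᵐ[μ] μ[Set.indicator {ω | Y ω ≤ y} (fun _ => (1:ℝ)) | MeasurableSpace.comap F inferInstance]

/-- `F` is probabilistically calibrated: the PIT is uniform on `[0,1]`. -/
def ProbCalibrated (μ : Measure Ω) (F : Ω → Measure ℝ) (Y U : Ω → ℝ) : Prop :=
  μ.map (PIT F Y U) = unif01

/-- `F` is marginally calibrated: `E[F(y)] = Q(Y ≤ y)` for every `y`. -/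
def MargCalibrated (μ : Measure Ω) (F : Ω → Measure ℝ) (Y : Ω → ℝ) : Prop :=
  ∀ y : ℝ, ∫ ω, cdfAt (F ω) y ∂μ = (μ {ω | Y ω ≤ y}).toReal

/-- `F` is CEP calibrated: `Q(Z_F ≤ α | q_α^-(F)) = α` a.s. for every `α ∈ (0,1)`. -/
def CEPCalibrated (μ : Measure Ω) (F : Ω → Measure ℝ) (Y U : Ω → ℝ) : Prop :=
  ∀ α ∈ Set.Ioo (0:ℝ) 1,
    μ[Set.indicator {ω | PIT F Y U ω ≤ α} (fun _ => (1:ℝ)) |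
      MeasurableSpace.comap (fun ω => lowerQuantile (F ω) α) inferInstance]
      =ᵐ[μ] fun _ => α

/-- `F` is threshold calibrated: `Q(Y ≤ t | F(t)) = F(t)` a.s. for every `t`. -/
def ThreshCalibrated (μ : Measure Ω) (F : Ω → Measure ℝ) (Y : Ω → ℝ) : Prop :=
  ∀ t : ℝ,
    μ[Set.indicator {ω | Y ω ≤ t} (fun _ => (1:ℝ)) |
      MeasurableSpace.comap (fun ω => cdfAt (F ω) t) inferInstance]
      =ᵐ[μ] fun ω => cdfAt (F ω) t

/-- An identification function: measurable, increasing and left-continuous in its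
first argument. -/
structure IsIdentificationFunction (V : ℝ → ℝ → ℝ) : Prop where
  meas : Measurable (Function.uncurry V)
  mono : ∀ y : ℝ, Monotone fun x => V x y
  leftCont : ∀ y x : ℝ, ContinuousWithinAt (fun x => V x y) (Set.Iic x) x

/-- Lower bound `T^-(G) = sup {x : ∫ V(x,y) dG(y) < 0}` of the functional induced by `V`. -/
def Tminus (V : ℝ → ℝ → ℝ) (G : Measure ℝ) : ℝ := sSup {x : ℝ | ∫ y, V x y ∂G < 0}

/-- Upper bound `T^+(G) = inf {x : ∫ V(x,y) dG(y) > 0}` of the functional induced by `V`. -/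
def Tplus (V : ℝ → ℝ → ℝ) (G : Measure ℝ) : ℝ := sInf {x : ℝ | 0 < ∫ y, V x y ∂G}

/-- `V` is of prediction error form `V(x,y) = v(x−y)`. -/
def PredErrorForm (V : ℝ → ℝ → ℝ) : Prop :=
  ∃ v : ℝ → ℝ, Monotone v ∧ (∀ x : ℝ, ContinuousWithinAt v (Set.Iic x) x) ∧
    (∃ r : ℝ, 0 < r ∧ v (-r) < 0 ∧ 0 < v r) ∧ ∀ x y : ℝ, V x y = v (x - y)

/-- `V` is of the form `V(x,y) = x − T(δ_y)` for a singleton-valued functional `T`. -/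
def DiracSingletonForm (V : ℝ → ℝ → ℝ) : Prop :=
  (∀ y : ℝ, Tminus V (Measure.dirac y) = Tplus V (Measure.dirac y)) ∧
  ∀ x y : ℝ, V x y = x - Tminus V (Measure.dirac y)

/-- Assumption (V): `V` induces the functional on a convex class `𝓕₀ ⊇ 𝓕` of probability
measures containing all Dirac measures, and `V` is of prediction error form or of the
form `V(x,y) = x − T(δ_y)` for a singleton-valued `T`. -/
structure AssumptionV (V : ℝ → ℝ → ℝ) (𝓕 : Set (Measure ℝ)) : Prop where
  inducing : ∃ 𝓕₀ : Set (Measure ℝ), 𝓕 ⊆ 𝓕₀ ∧ (∀ G ∈ 𝓕₀, IsProbabilityMeasure G) ∧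
    (∀ y : ℝ, Measure.dirac y ∈ 𝓕₀) ∧
    (∀ G₁ ∈ 𝓕₀, ∀ G₂ ∈ 𝓕₀, ∀ p : ℝ, 0 ≤ p → p ≤ 1 →
      ENNReal.ofReal p • G₁ + ENNReal.ofReal (1 - p) • G₂ ∈ 𝓕₀) ∧
    ∀ G ∈ 𝓕₀, ∀ x : ℝ, Integrable (fun y => V x y) G
  form : PredErrorForm V ∨ DiracSingletonForm V

/-- The pair `(T^-(F), T^+(F))` of the interval-valued functional applied to the
random predictive distribution. -/
def TpairOf (V : ℝ → ℝ → ℝ) (F : Ω → Measure ℝ) (ω : Ω) : ℝ × ℝ :=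
  (Tminus V (F ω), Tplus V (F ω))

/-- Conditional `T`-calibration of the predictive distribution `F`:
`T(L(Y | T(F))) = T(F)` almost surely. -/
def CondTCalibrated (μ : Measure Ω) [IsFiniteMeasure μ] (V : ℝ → ℝ → ℝ)
    (F : Ω → Measure ℝ) (Y : Ω → ℝ) : Prop :=
  ∀ᵐ ω ∂μ,
    Tminus V (condDistrib Y (TpairOf V F) μ (TpairOf V F ω)) = Tminus V (F ω) ∧
    Tplus V (condDistrib Y (TpairOf V F) μ (TpairOf V F ω)) = Tplus V (F ω)

/-- Unconditional `T`-calibration of the predictive distribution `F`. -/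
def UncondTCalibrated (μ : Measure Ω) (V : ℝ → ℝ → ℝ)
    (F : Ω → Measure ℝ) (Y : Ω → ℝ) : Prop :=
  ∀ ε : ℝ, 0 < ε →
    (∫ ω, V (Tplus V (F ω) - ε) (Y ω) ∂μ) ≤ 0 ∧
    0 ≤ ∫ ω, V (Tminus V (F ω) + ε) (Y ω) ∂μ

/-- Unconditional `T`-calibration of a single-valued point forecast `X`. -/
def UncondCalibratedPt (μ : Measure Ω) (V : ℝ → ℝ → ℝ) (X Y : Ω → ℝ) : Prop :=
  ∀ ε : ℝ, 0 < ε →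
    (∫ ω, V (X ω - ε) (Y ω) ∂μ) ≤ 0 ∧ 0 ≤ ∫ ω, V (X ω + ε) (Y ω) ∂μ

/-- The sets defining `T^-(G)` and `T^+(G)` are nonempty and bounded, so that the induced
functional is well defined and finite at `G`. -/
def TWellDefined (V : ℝ → ℝ → ℝ) (G : Measure ℝ) : Prop :=
  {x : ℝ | ∫ y, V x y ∂G < 0}.Nonempty ∧ BddAbove {x : ℝ | ∫ y, V x y ∂G < 0} ∧
  {x : ℝ | 0 < ∫ y, V x y ∂G}.Nonempty ∧ BddBelow {x : ℝ | 0 < ∫ y, V x y ∂G}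

/-- The elementary loss `S_η(x,y) = (1{η ≤ x} − 1{η ≤ y}) V(η,y)`. -/
def elemLoss (V : ℝ → ℝ → ℝ) (η x y : ℝ) : ℝ :=
  ((if η ≤ x then (1:ℝ) else 0) - if η ≤ y then (1:ℝ) else 0) * V η y

/-- `S` has mixture (Choquet) form with respect to the identification function `V`. -/
def MixtureForm (V S : ℝ → ℝ → ℝ) : Prop :=
  ∃ H : Measure ℝ, IsLocallyFiniteMeasure H ∧
    ∀ x y : ℝ, S x y = ∫ η, elemLoss V η x y ∂H

/-- `S` is a canonical loss for the functional induced by `V`. -/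
def IsCanonicalLoss (V S : ℝ → ℝ → ℝ) : Prop :=
  (∀ x y : ℝ, 0 ≤ S x y) ∧
  ∃ a : ℝ, 0 < a ∧ ∃ b : ℝ → ℝ, Measurable b ∧
    ∀ x y : ℝ, S x y = a * (∫ η, elemLoss V η x y) + b y

/-- `S` is a consistent scoring function for the functional induced by `V` on the class `𝓕`. -/
def ConsistentFor (S V : ℝ → ℝ → ℝ) (𝓕 : Set (Measure ℝ)) : Prop :=
  ∀ G ∈ 𝓕, ∀ t ∈ Set.Icc (Tminus V G) (Tplus V G), ∀ x : ℝ,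
    ∫ y, S t y ∂G ≤ ∫ y, S x y ∂G

/-- `S` is a strictly consistent scoring function for the functional induced by `V` on `𝓕`. -/
def StrictlyConsistentFor (S V : ℝ → ℝ → ℝ) (𝓕 : Set (Measure ℝ)) : Prop :=
  ConsistentFor S V 𝓕 ∧
  ∀ G ∈ 𝓕, ∀ t ∈ Set.Icc (Tminus V G) (Tplus V G), ∀ x : ℝ,
    x ∉ Set.Icc (Tminus V G) (Tplus V G) → ∫ y, S t y ∂G < ∫ y, S x y ∂G

/-- The empirical distribution of the outcomes `y i`, `i ∈ s`. -/
def empOn {n : ℕ} (y : Fin n → ℝ) (s : Finset (Fin n)) : Measure ℝ :=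
  (s.card : ENNReal)⁻¹ • ∑ i ∈ s, Measure.dirac (y i)

/-- A locally bounded real function of a real variable. -/
def LocallyBdd (f : ℝ → ℝ) : Prop :=
  ∀ η₀ : ℝ, ∃ ε : ℝ, 0 < ε ∧ ∃ C : ℝ, ∀ η : ℝ, |η - η₀| < ε → |f η| ≤ C

/-- All CDFs in the class `𝓕` are continuous and strictly increasing on a shared
support interval. -/
def CSI (𝓕 : Set (Measure ℝ)) : Prop :=
  ∃ S : Set ℝ, S.Nonempty ∧ S.OrdConnected ∧ ∀ G ∈ 𝓕,
    Continuous (cdfAt G) ∧ StrictMonoOn (cdfAt G) S ∧ G Sᶜ = 0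

/-- The conditioning variable for quantile calibration at level `α`: the interval of
`α`-quantiles, represented by its endpoints. -/
def qPairOf (F : Ω → Measure ℝ) (α : ℝ) (ω : Ω) : ℝ × ℝ :=
  (lowerQuantile (F ω) α, upperQuantile (F ω) α)

/-- `F` is quantile calibrated: for every `α ∈ (0,1)`,
`q_α(L(Y | q_α(F))) = q_α(F)` almost surely. -/
def QuantileCalibrated (μ : Measure Ω) [IsFiniteMeasure μ]
    (F : Ω → Measure ℝ) (Y : Ω → ℝ) : Prop :=
  ∀ α ∈ Set.Ioo (0:ℝ) 1, ∀ᵐ ω ∂μ,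
    lowerQuantile (condDistrib Y (qPairOf F α) μ (qPairOf F α ω)) α
      = lowerQuantile (F ω) α ∧
    upperQuantile (condDistrib Y (qPairOf F α) μ (qPairOf F α ω)) α
      = upperQuantile (F ω) α


/-- The output of the `T`-PAV algorithm: a nondecreasing sequence whose empirical measure
is conditionally `T`-calibrated and which minimizes the empirical score simultaneously
for all mixture-form scoring functions over all nondecreasing sequences. -/
def IsPAVSolution (V : ℝ → ℝ → ℝ) (T : Measure ℝ → ℝ) {n : ℕ}
    (y : Fin n → ℝ) (xhat : Fin n → ℝ) : Prop :=
  Monotone xhat ∧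
  (∀ i : Fin n, T (empOn y (Finset.univ.filter fun j => xhat j = xhat i)) = xhat i) ∧
  ∀ S : ℝ → ℝ → ℝ, MixtureForm V S → ∀ t : Fin n → ℝ, Monotone t →
    ∑ i, S (xhat i) (y i) ≤ ∑ i, S (t i) (y i)

namespace EmpMCBAux

open MeasureTheory

lemma elemLoss_sub (V : ℝ → ℝ → ℝ) (y u v : ℝ) (huv : u ≤ v) :
    (fun η => elemLoss V η v y - elemLoss V η u y)
      = Set.indicator (Set.Ioc u v) (fun η => V η y) := by
  funext η
  by_cases h1 : η ≤ u
  · have h2 : η ≤ v := h1.trans huv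
    simp only [elemLoss, Set.indicator_apply, Set.mem_Ioc, h1, h2, if_true, not_lt.2 h1,
      false_and, if_false]
    ring
  · by_cases h2 : η ≤ v
    · simp only [elemLoss, Set.indicator_apply, Set.mem_Ioc, h1, h2, if_true, if_false,
        lt_of_not_ge h1, true_and]
      ring
    · simp only [elemLoss, Set.indicator_apply, Set.mem_Ioc, h1, h2, if_false, and_false]
      ring

lemma integrableOn_Ioc (V : ℝ → ℝ → ℝ)
    (hSint : ∀ a b : ℝ, Integrable (fun η => elemLoss V η a b) (volume : Measure ℝ))
    (y u v : ℝ) : IntegrableOn (fun η => V η y) (Set.Ioc u v) volume := by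
  rcases le_or_gt u v with h | h
  · have h2 : Integrable (Set.indicator (Set.Ioc u v) (fun η => V η y)) volume := by
      rw [← elemLoss_sub V y u v h]
      exact (hSint v y).sub (hSint u y)
    exact (integrable_indicator_iff measurableSet_Ioc).1 h2
  · rw [Set.Ioc_eq_empty (not_lt.2 h.le)]
    exact integrableOn_empty

lemma intervalIntegrable_V (V : ℝ → ℝ → ℝ)
    (hSint : ∀ a b : ℝ, Integrable (fun η => elemLoss V η a b) (volume : Measure ℝ))
    (y u v : ℝ) : IntervalIntegrable (fun η => V η y) volume u v := by
  rw [intervalIntegrable_iff, Set.uIoc]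
  exact integrableOn_Ioc V hSint y _ _

lemma integral_diff (V : ℝ → ℝ → ℝ)
    (hSint : ∀ a b : ℝ, Integrable (fun η => elemLoss V η a b) (volume : Measure ℝ))
    (y u v : ℝ) :
    (∫ η, elemLoss V η v y) - (∫ η, elemLoss V η u y) = ∫ η in u..v, V η y := by
  have key : ∀ u v : ℝ, u ≤ v →
      (∫ η, elemLoss V η v y) - (∫ η, elemLoss V η u y) = ∫ η in Set.Ioc u v, V η y := by
    intro u v h
    rw [← integral_sub (hSint v y) (hSint u y)]
    have h2 : (∫ η, (elemLoss V η v y - elemLoss V η u y))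
        = ∫ η, Set.indicator (Set.Ioc u v) (fun η => V η y) η := by
      rw [elemLoss_sub V y u v h]
    rw [h2, integral_indicator measurableSet_Ioc]
  rcases le_total u v with h | h
  · rw [intervalIntegral.integral_of_le h]
    exact key u v h
  · rw [intervalIntegral.integral_of_ge h]
    have := key v u h
    linarith

end EmpMCBAux

/-- **Theorem (Statement 13).** Under a canonical loss, the empirical miscalibration
component decomposes as `MCB̂ = MCB̂_u + MCB̂_c` with both components nonnegative,
provided there is a constant `chat` such that the translated forecasts `xᵢ + chat` are
unconditionally `T`-calibrated with respect to the empirical measure. -/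
theorem empirical_mcb_decomposition
    (V : ℝ → ℝ → ℝ) (hV : IsIdentificationFunction V)
    (T : Measure ℝ → ℝ) (hT : T = Tminus V ∨ T = Tplus V)
    {n : ℕ} (hn : 0 < n) (x y xhat : Fin n → ℝ) (hx : Monotone x)
    (hpav : IsPAVSolution V T y xhat)
    (S : ℝ → ℝ → ℝ) (hS : IsCanonicalLoss V S)
    -- all empirical score terms are finite:
    (hSint : ∀ a b : ℝ, Integrable (fun η => elemLoss V η a b) (volume : Measure ℝ))
    (chat : ℝ)
    -- the empirical measure of `(xᵢ + chat, yᵢ)` is unconditionally `T`-calibrated: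
    (hchat : ∀ ε : ℝ, 0 < ε →
      ((n:ℝ)⁻¹ * ∑ i, V (x i + chat - ε) (y i) ≤ 0) ∧
      (0 ≤ (n:ℝ)⁻¹ * ∑ i, V (x i + chat + ε) (y i))) :
    ((n:ℝ)⁻¹ * ∑ i, S (x i) (y i) - (n:ℝ)⁻¹ * ∑ i, S (xhat i) (y i)
      = ((n:ℝ)⁻¹ * ∑ i, S (x i) (y i) - (n:ℝ)⁻¹ * ∑ i, S (x i + chat) (y i))
        + ((n:ℝ)⁻¹ * ∑ i, S (x i + chat) (y i) - (n:ℝ)⁻¹ * ∑ i, S (xhat i) (y i))) ∧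
    (0 ≤ (n:ℝ)⁻¹ * ∑ i, S (x i) (y i) - (n:ℝ)⁻¹ * ∑ i, S (x i + chat) (y i)) ∧
    (0 ≤ (n:ℝ)⁻¹ * ∑ i, S (x i + chat) (y i) - (n:ℝ)⁻¹ * ∑ i, S (xhat i) (y i)) := by
  obtain ⟨hS0, a, ha, b, hb, hSeq⟩ := hS
  have hn' : (0:ℝ) < (n:ℝ)⁻¹ := inv_pos.2 (Nat.cast_pos.2 hn)
  -- change of variables for each i
  have hcomp : ∀ i : Fin n, ∫ η in (x i)..(x i + chat), V η (y i)
      = ∫ c in (0:ℝ)..chat, V (c + x i) (y i) := by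
    intro i
    have h := intervalIntegral.integral_comp_add_right (a := 0) (b := chat)
      (fun η => V η (y i)) (x i)
    simp only [zero_add] at h
    rw [h, add_comm chat (x i)]
  have hII : ∀ i : Fin n,
      IntervalIntegrable (fun c => V (c + x i) (y i)) volume 0 chat := by
    intro i
    have h0 := (EmpMCBAux.intervalIntegrable_V V hSint (y i) (x i) (x i + chat)).comp_add_right
      (x i)
    simpa only [sub_self, add_sub_cancel_left] using h0
  have hswap : ∑ i, ∫ c in (0:ℝ)..chat, V (c + x i) (y i)
      = ∫ c in (0:ℝ)..chat, ∑ i, V (c + x i) (y i) :=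
    (intervalIntegral.integral_finset_sum (fun i _ => hII i)).symm
  -- the key integral is nonpositive
  have hA : ∫ c in (0:ℝ)..chat, (∑ i, V (c + x i) (y i)) ≤ 0 := by
    rcases le_or_gt 0 chat with h | h
    · rw [intervalIntegral.integral_of_le h, integral_Ioc_eq_integral_Ioo]
      apply setIntegral_nonpos measurableSet_Ioo
      intro c hc
      have hε : 0 < chat - c := by linarith [hc.2]
      have h1 := (hchat (chat - c) hε).1
      have h2 : ∑ i, V (x i + chat - (chat - c)) (y i) ≤ 0 := by
        by_contra hcon
        push_neg at hcon
        exact absurd h1 (not_le.2 (mul_pos hn' hcon))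
      calc ∑ i, V (c + x i) (y i)
          = ∑ i, V (x i + chat - (chat - c)) (y i) := by
            apply Finset.sum_congr rfl
            intro i _
            ring_nf
        _ ≤ 0 := h2
    · rw [intervalIntegral.integral_of_ge h.le]
      have hpos : 0 ≤ ∫ c in Set.Ioc chat 0, (∑ i, V (c + x i) (y i)) := by
        rw [integral_Ioc_eq_integral_Ioo]
        apply setIntegral_nonneg measurableSet_Ioo
        intro c hc
        have hε : 0 < c - chat := by linarith [hc.1]
        have h1 := (hchat (c - chat) hε).2
        have h2 : 0 ≤ ∑ i, V (x i + chat + (c - chat)) (y i) := by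
          by_contra hcon
          push_neg at hcon
          exact absurd h1 (not_le.2 (by nlinarith))
        calc (0:ℝ) ≤ ∑ i, V (x i + chat + (c - chat)) (y i) := h2
          _ = ∑ i, V (c + x i) (y i) := by
            apply Finset.sum_congr rfl
            intro i _
            ring_nf
      linarith
  -- MCB_u : translate the scores
  have hsum1 : ∑ i, (S (x i) (y i) - S (x i + chat) (y i))
      = a * (- ∫ c in (0:ℝ)..chat, ∑ i, V (c + x i) (y i)) := by
    have hterm : ∀ i : Fin n, S (x i) (y i) - S (x i + chat) (y i)
        = a * (-(∫ η in (x i)..(x i + chat), V η (y i))) := by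
      intro i
      have hd := EmpMCBAux.integral_diff V hSint (y i) (x i) (x i + chat)
      rw [hSeq (x i) (y i), hSeq (x i + chat) (y i)]
      linear_combination (-a) * hd
    calc ∑ i, (S (x i) (y i) - S (x i + chat) (y i))
        = ∑ i, a * (-(∫ η in (x i)..(x i + chat), V η (y i))) :=
          Finset.sum_congr rfl fun i _ => hterm i
      _ = a * (- ∑ i, ∫ η in (x i)..(x i + chat), V η (y i)) := by
          rw [← Finset.mul_sum, ← Finset.sum_neg_distrib]
      _ = a * (- ∑ i, ∫ c in (0:ℝ)..chat, V (c + x i) (y i)) := by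
          rw [Finset.sum_congr rfl fun i _ => hcomp i]
      _ = a * (- ∫ c in (0:ℝ)..chat, ∑ i, V (c + x i) (y i)) := by rw [hswap]
  have hmcbu : 0 ≤ (n:ℝ)⁻¹ * ∑ i, S (x i) (y i) - (n:ℝ)⁻¹ * ∑ i, S (x i + chat) (y i) := by
    have h1 : 0 ≤ ∑ i, (S (x i) (y i) - S (x i + chat) (y i)) := by
      rw [hsum1]
      exact mul_nonneg ha.le (neg_nonneg.2 hA)
    rw [Finset.sum_sub_distrib] at h1
    have h2 := mul_nonneg hn'.le h1
    rw [mul_sub] at h2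
    exact h2
  -- MCB_c : PAV optimality under the mixture-form score a * ∫ elemLoss
  have hmcbc : 0 ≤ (n:ℝ)⁻¹ * ∑ i, S (x i + chat) (y i) - (n:ℝ)⁻¹ * ∑ i, S (xhat i) (y i) := by
    set S' : ℝ → ℝ → ℝ := fun t y' => a * ∫ η, elemLoss V η t y' with hS'def
    have hH : IsLocallyFiniteMeasure (ENNReal.ofReal a • (volume : Measure ℝ)) := by
      constructor
      intro p
      obtain ⟨s, hs, hfin⟩ := (volume : Measure ℝ).finiteAt_nhds p
      refine ⟨s, hs, ?_⟩
      rw [Measure.smul_apply, smul_eq_mul]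
      exact ENNReal.mul_lt_top ENNReal.ofReal_lt_top hfin
    have hmix : MixtureForm V S' := by
      refine ⟨ENNReal.ofReal a • volume, hH, fun t y' => ?_⟩
      rw [integral_smul_measure, ENNReal.toReal_ofReal ha.le, smul_eq_mul]
    have hpavle := hpav.2.2 S' hmix (fun i => x i + chat)
      (fun i j hij => add_le_add (hx hij) le_rfl)
    have h3 : ∑ i, S (xhat i) (y i) ≤ ∑ i, S (x i + chat) (y i) := by
      have e1 : ∀ (t : ℝ) (i : Fin n), S t (y i) = S' t (y i) + b (y i) := fun t i =>
        hSeq t (y i)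
      calc ∑ i, S (xhat i) (y i) = ∑ i, (S' (xhat i) (y i) + b (y i)) :=
            Finset.sum_congr rfl fun i _ => e1 (xhat i) i
        _ = (∑ i, S' (xhat i) (y i)) + ∑ i, b (y i) := Finset.sum_add_distrib
        _ ≤ (∑ i, S' (x i + chat) (y i)) + ∑ i, b (y i) := by linarith [hpavle]
        _ = ∑ i, (S' (x i + chat) (y i) + b (y i)) := Finset.sum_add_distrib.symm
        _ = ∑ i, S (x i + chat) (y i) :=
            Finset.sum_congr rfl fun i _ => (e1 (x i + chat) i).symm
    have h2 := mul_nonneg hn'.le (sub_nonneg.2 h3)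
    rw [mul_sub] at h2
    exact h2
  exact ⟨by ring, hmcbu, hmcbc⟩

end
end

section
/- There exists a prediction space in which the predictive distribution F takes only two values, both continuous strictly increasing CDFs on a shared support interval, such that F is simultaneously CEP calibrated, quantile calibrated, and threshold calibrated, but fails to be auto-calibrated. -/
open MeasureTheory ProbabilityTheory

noncomputable section

variable {Ω : Type*} [MeasurableSpace Ω]

/-!
The forecast is `G true` or `G false` with probability `1/2` each, and given the forecast `G b`
the outcome has law `H b`. The laws satisfy `G true = G false` on `(-∞, 1/2]`, `H b = G b` on
`[1/2, ∞)` and `H true + H false = G true + G false`. A conditioning variable that is a function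
of the forecast either separates the two forecasts, and then it only looks at points where
`G true ≠ G false`, hence where `H b = G b`; or it does not, and then it only sees the average law
`(H true + H false) / 2 = (G true + G false) / 2`. This handles the CEP, quantile and threshold
conditionings. Conditioning on the forecast itself sees `H true (1/4) = 1/8 ≠ 1/4 = G true (1/4)`.
-/

open Set
open scoped ENNReal NNReal

lemma cdfAt_mono (G : Measure ℝ) [IsFiniteMeasure G] : Monotone (cdfAt G) := fun _ _ h =>
  ENNReal.toReal_mono (measure_ne_top _ _) (measure_mono (Iic_subset_Iic.2 h))

lemma cdfLt_eq_cdfAt (G : Measure ℝ) [NullSingletonClass G] : cdfLt G = cdfAt G :=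
  funext fun _ => by rw [cdfLt, cdfAt, measure_congr Iio_ae_eq_Iic]

lemma cdfAt_add (G G' : Measure ℝ) [IsFiniteMeasure G] [IsFiniteMeasure G'] (x : ℝ) :
    cdfAt (G + G') x = cdfAt G x + cdfAt G' x := by
  rw [cdfAt, Measure.add_apply, ENNReal.toReal_add (measure_ne_top _ _) (measure_ne_top _ _)]
  rfl

lemma cdfAt_smul (c : ℝ≥0∞) (G : Measure ℝ) (x : ℝ) :
    cdfAt (c • G) x = c.toReal * cdfAt G x := by
  rw [cdfAt, Measure.smul_apply, smul_eq_mul, ENNReal.toReal_mul]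
  rfl

lemma cdfAt_half_smul_add (G G' : Measure ℝ) [IsFiniteMeasure G] [IsFiniteMeasure G'] (x : ℝ) :
    cdfAt ((2⁻¹ : ℝ≥0∞) • (G + G')) x = (cdfAt G x + cdfAt G' x) / 2 := by
  rw [cdfAt_smul, cdfAt_add, ENNReal.toReal_inv, ENNReal.toReal_ofNat]
  ring

lemma PIT_eq_cdfAt {γ : Type*} {F : γ → Measure ℝ} [∀ ω, NullSingletonClass (F ω)]
    (Y U : γ → ℝ) (ω : γ) :
    PIT F Y U ω = cdfAt (F ω) (Y ω) := by
  rw [PIT, cdfLt_eq_cdfAt, sub_self, mul_zero, add_zero]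

structure IsUnitIntervalLaw (G : Measure ℝ) : Prop where
  isProbabilityMeasure : IsProbabilityMeasure G
  nullSingletonClass : NullSingletonClass G
  continuous_cdfAt : Continuous (cdfAt G)
  strictMonoOn_cdfAt : StrictMonoOn (cdfAt G) (Icc 0 1)
  measure_compl_Icc : G (Icc 0 1)ᶜ = 0

namespace IsUnitIntervalLaw

variable {G : Measure ℝ} {α q x : ℝ}

lemma cdfAt_of_nonpos (hG : IsUnitIntervalLaw G) (hx : x ≤ 0) : cdfAt G x = 0 := by
  have := hG.nullSingletonClass
  have hsub : Iic x ⊆ {0} ∪ (Icc 0 1)ᶜ := fun y hy => by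
    rcases eq_or_lt_of_le (mem_Iic.1 hy |>.trans hx) with h | h
    · exact Or.inl h
    · exact Or.inr fun h' => h'.1.not_gt h
  have : G (Iic x) = 0 :=
    measure_mono_null hsub (measure_union_null (measure_singleton 0) hG.measure_compl_Icc)
  rw [cdfAt, this, ENNReal.toReal_zero]

lemma cdfAt_of_one_le (hG : IsUnitIntervalLaw G) (hx : 1 ≤ x) : cdfAt G x = 1 := by
  have := hG.isProbabilityMeasure
  have : G (Iic x)ᶜ = 0 := measure_mono_null
    (fun y hy => fun h' => hy (h'.2.trans hx)) hG.measure_compl_Icc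
  rw [cdfAt, prob_compl_eq_zero_iff measurableSet_Iic |>.1 this, ENNReal.toReal_one]

lemma mem_Ioo_of_cdfAt_eq (hG : IsUnitIntervalLaw G) (hα : α ∈ Ioo 0 1) (hq : cdfAt G q = α) :
    q ∈ Ioo 0 1 := by
  constructor
  · by_contra! h
    linarith [hα.1, hG.cdfAt_of_nonpos h]
  · by_contra! h
    linarith [hα.2, hG.cdfAt_of_one_le h]

lemma cdfAt_lt_of_lt (hG : IsUnitIntervalLaw G) (hα : α ∈ Ioo 0 1) (hq : cdfAt G q = α)
    (hx : x < q) : cdfAt G x < α := by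
  obtain ⟨hq0, hq1⟩ := hG.mem_Ioo_of_cdfAt_eq hα hq
  rcases le_total x 0 with h | h
  · rw [hG.cdfAt_of_nonpos h]
    exact hα.1
  · rw [← hq]
    exact hG.strictMonoOn_cdfAt ⟨h, by linarith⟩ ⟨hq0.le, hq1.le⟩ hx

lemma lt_cdfAt_of_lt (hG : IsUnitIntervalLaw G) (hα : α ∈ Ioo 0 1) (hq : cdfAt G q = α)
    (hx : q < x) : α < cdfAt G x := by
  obtain ⟨hq0, hq1⟩ := hG.mem_Ioo_of_cdfAt_eq hα hq
  rcases le_total 1 x with h | h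
  · rw [hG.cdfAt_of_one_le h]
    exact hα.2
  · rw [← hq]
    exact hG.strictMonoOn_cdfAt ⟨hq0.le, hq1.le⟩ ⟨by linarith, h⟩ hx

lemma setOf_cdfAt_le (hG : IsUnitIntervalLaw G) (hα : α ∈ Ioo 0 1) (hq : cdfAt G q = α) :
    {x | cdfAt G x ≤ α} = Iic q := by
  have := hG.isProbabilityMeasure
  ext x
  refine ⟨fun hx => not_lt.1 fun h => (hG.lt_cdfAt_of_lt hα hq h).not_ge hx, fun hx => ?_⟩
  exact hq ▸ cdfAt_mono G hx

lemma lowerQuantile_eq (hG : IsUnitIntervalLaw G) (hα : α ∈ Ioo 0 1) (hq : cdfAt G q = α) :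
    lowerQuantile G α = q := by
  have := hG.isProbabilityMeasure
  have hset : {x | α ≤ cdfAt G x} = Ici q := by
    ext x
    refine ⟨fun hx => not_lt.1 fun h => (hG.cdfAt_lt_of_lt hα hq h).not_ge hx, fun hx => ?_⟩
    exact hq ▸ cdfAt_mono G hx
  rw [lowerQuantile, hset, csInf_Ici]

lemma upperQuantile_eq (hG : IsUnitIntervalLaw G) (hα : α ∈ Ioo 0 1) (hq : cdfAt G q = α) :
    upperQuantile G α = q := by
  have := hG.nullSingletonClass
  rw [upperQuantile, cdfLt_eq_cdfAt, hG.setOf_cdfAt_le hα hq, csSup_Iic]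

lemma cdfAt_lowerQuantile (hG : IsUnitIntervalLaw G) (hα : α ∈ Ioo 0 1) :
    cdfAt G (lowerQuantile G α) = α := by
  obtain ⟨q, -, hq⟩ := intermediate_value_Icc zero_le_one hG.continuous_cdfAt.continuousOn
    (by rw [hG.cdfAt_of_nonpos le_rfl, hG.cdfAt_of_one_le le_rfl]; exact Ioo_subset_Icc_self hα)
  rwa [hG.lowerQuantile_eq hα hq]

lemma upperQuantile_eq_lowerQuantile (hG : IsUnitIntervalLaw G) (hα : α ∈ Ioo 0 1) :
    upperQuantile G α = lowerQuantile G α :=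
  hG.upperQuantile_eq hα (hG.cdfAt_lowerQuantile hα)

lemma half_smul_add {G' : Measure ℝ} (hG : IsUnitIntervalLaw G) (hG' : IsUnitIntervalLaw G') :
    IsUnitIntervalLaw ((2⁻¹ : ℝ≥0∞) • (G + G')) := by
  have := hG.isProbabilityMeasure
  have := hG'.isProbabilityMeasure
  have := hG.nullSingletonClass
  have := hG'.nullSingletonClass
  have hcdf : cdfAt ((2⁻¹ : ℝ≥0∞) • (G + G')) = fun x => (cdfAt G x + cdfAt G' x) / 2 :=
    funext (cdfAt_half_smul_add G G')
  refine ⟨⟨?_⟩, ⟨fun x => by simp⟩, ?_, ?_, ?_⟩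
  · simp [ENNReal.inv_two_add_inv_two]
  · rw [hcdf]
    exact (hG.continuous_cdfAt.add hG'.continuous_cdfAt).div_const 2
  · rw [hcdf]
    exact fun x hx y hy hxy => by
      linarith [hG.strictMonoOn_cdfAt hx hy hxy, hG'.strictMonoOn_cdfAt hx hy hxy]
  · simp [hG.measure_compl_Icc, hG'.measure_compl_Icc]

end IsUnitIntervalLaw

def ramp (a b x : ℝ) : ℝ := max (min x b - a) 0

lemma ramp_of_le {a b x : ℝ} (h : x ≤ a) : ramp a b x = 0 :=
  max_eq_right (by linarith [min_le_left x b])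

lemma ramp_of_ge {a b x : ℝ} (hab : a ≤ b) (h : b ≤ x) : ramp a b x = b - a := by
  rw [ramp, min_eq_right h, max_eq_left (by linarith)]

lemma ramp_of_mem {a b x : ℝ} (h1 : a ≤ x) (h2 : x ≤ b) : ramp a b x = x - a := by
  rw [ramp, min_eq_left h2, max_eq_left (by linarith)]

lemma monotone_ramp (a b : ℝ) : Monotone (ramp a b) := fun _ _ h =>
  max_le_max (sub_le_sub_right (min_le_min h le_rfl) a) le_rfl

@[fun_prop]
lemma continuous_ramp (a b : ℝ) : Continuous (ramp a b) := by
  unfold ramp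
  fun_prop

lemma ramp_add_ramp {a b c : ℝ} (hab : a ≤ b) (hbc : b ≤ c) (x : ℝ) :
    ramp a b x + ramp b c x = ramp a c x := by
  rcases le_total x b with h | h
  · rw [ramp_of_le h, add_zero, ramp, ramp, min_eq_left h, min_eq_left (h.trans hbc)]
  · rw [ramp_of_ge hab h, ramp, ramp, max_eq_left (by linarith [le_min h hbc]),
      max_eq_left (by linarith [le_min h hbc])]
    ring

lemma cdfAt_smul_restrict_Ioc (c : ℝ≥0) (a b x : ℝ) :
    cdfAt (c • volume.restrict (Ioc a b)) x = c * ramp a b x := by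
  have hset : Iic x ∩ Ioc a b = Ioc a (min x b) := by
    ext y
    simp only [mem_inter_iff, mem_Iic, mem_Ioc, le_min_iff]
    tauto
  rw [cdfAt, Measure.smul_apply, Measure.restrict_apply measurableSet_Iic, hset, Real.volume_Ioc,
    ENNReal.smul_def, smul_eq_mul, ENNReal.toReal_mul, ENNReal.toReal_ofReal', ramp]
  rfl

def quarterMix (a b c d : ℝ≥0) : Measure ℝ :=
  a • volume.restrict (Ioc 0 (1/4)) + b • volume.restrict (Ioc (1/4) (1/2)) +
    c • volume.restrict (Ioc (1/2) (3/4)) + d • volume.restrict (Ioc (3/4) 1)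

namespace quarterMix

variable (a b c d : ℝ≥0)

lemma cdfAt_eq (x : ℝ) :
    cdfAt (quarterMix a b c d) x = a * ramp 0 (1/4) x + b * ramp (1/4) (1/2) x +
      c * ramp (1/2) (3/4) x + d * ramp (3/4) 1 x := by
  simp only [quarterMix, cdfAt_add, cdfAt_smul_restrict_Ioc]

instance : IsFiniteMeasure (quarterMix a b c d) := by
  unfold quarterMix
  infer_instance

instance : NullSingletonClass (quarterMix a b c d) := ⟨fun x => by simp [quarterMix]⟩

lemma measure_compl_Icc : quarterMix a b c d (Icc 0 1)ᶜ = 0 := by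
  have (p q : ℝ) (hp : 0 ≤ p) (hq : q ≤ 1) :
      volume.restrict (Ioc p q) (Icc (0:ℝ) 1)ᶜ = 0 := by
    rw [Measure.restrict_apply' measurableSet_Ioc]
    exact measure_mono_null (fun y hy => hy.1 ⟨hp.trans hy.2.1.le, hy.2.2.trans hq⟩)
      measure_empty
  simp (disch := norm_num) [quarterMix, this]

lemma isUnitIntervalLaw {a b c d : ℝ≥0} (ha : 0 < a) (hb : 0 < b) (hc : 0 < c) (hd : 0 < d)
    (hsum : a + b + c + d = 4) : IsUnitIntervalLaw (quarterMix a b c d) := by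
  have hsum' : (a + b + c + d : ℝ) = 4 := by exact_mod_cast hsum
  have hIic : quarterMix a b c d (Iic 1) = 1 := by
    rw [← ENNReal.ofReal_toReal (measure_ne_top _ _), ← cdfAt, cdfAt_eq,
      ramp_of_ge (by norm_num) (by norm_num), ramp_of_ge (by norm_num) (by norm_num),
      ramp_of_ge (by norm_num) (by norm_num), ramp_of_ge (by norm_num) le_rfl]
    norm_num
    linarith
  have hIoi : quarterMix a b c d (Iic 1)ᶜ = 0 :=
    measure_mono_null (compl_subset_compl.2 Icc_subset_Iic_self) (measure_compl_Icc a b c d)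
  refine ⟨⟨?_⟩, inferInstance, ?_, ?_, measure_compl_Icc a b c d⟩
  · rw [← measure_add_measure_compl measurableSet_Iic (s := Iic (1:ℝ)), hIic, hIoi, add_zero]
  · rw [funext (cdfAt_eq a b c d)]
    fun_prop
  · intro x hx y hy hxy
    have hquarters (z : ℝ) (hz : z ∈ Icc (0:ℝ) 1) :
        ramp 0 (1/4) z + ramp (1/4) (1/2) z + ramp (1/2) (3/4) z + ramp (3/4) 1 z = z := by
      rw [ramp_add_ramp (by norm_num) (by norm_num), ramp_add_ramp (by norm_num) (by norm_num),
        ramp_add_ramp (by norm_num) (by norm_num), ramp_of_mem hz.1 hz.2, sub_zero]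
    have hm : 0 < min (min (a:ℝ) b) (min c d) := lt_min (lt_min ha hb) (lt_min hc hd)
    have h₁ := monotone_ramp 0 (1/4) hxy.le
    have h₂ := monotone_ramp (1/4) (1/2) hxy.le
    have h₃ := monotone_ramp (1/2) (3/4) hxy.le
    have h₄ := monotone_ramp (3/4) 1 hxy.le
    rw [cdfAt_eq, cdfAt_eq]
    nlinarith [hquarters x hx, hquarters y hy, min_le_left (min (a:ℝ) b) (min c d),
      min_le_right (min (a:ℝ) b) (min c d), min_le_left (a:ℝ) b, min_le_right (a:ℝ) b,
      min_le_left (c:ℝ) d, min_le_right (c:ℝ) d]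

end quarterMix

lemma condExp_comap_fintype_ae_eq {ι E : Type*} [Fintype ι] [MeasurableSpace ι]
    [MeasurableSingletonClass ι] [NormedAddCommGroup E] [NormedSpace ℝ E] [CompleteSpace E]
    {μ : Measure Ω} [IsFiniteMeasure μ] {B : Ω → ι} (hB : Measurable B) {f : Ω → E}
    (hf : Integrable f μ) {k : ι → E}
    (hk : ∀ i, ∫ ω in B ⁻¹' {i}, f ω ∂μ = μ.real (B ⁻¹' {i}) • k i) :
    μ[f | MeasurableSpace.comap B inferInstance] =ᵐ[μ] k ∘ B := by
  classical
  have hkB : Integrable (k ∘ B) μ := (Integrable.of_finite (μ := μ.map B)).comp_measurable hB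
  have hfiber (i : ι) : MeasurableSet (B ⁻¹' {i}) := hB (measurableSet_singleton i)
  have hkBm : StronglyMeasurable[MeasurableSpace.comap B inferInstance] (k ∘ B) :=
    StronglyMeasurable.of_discrete.comp_measurable (comap_measurable B)
  refine (ae_eq_condExp_of_forall_setIntegral_eq hB.comap_le hf (fun _ _ _ => hkB.integrableOn)
    ?_ hkBm.aestronglyMeasurable).symm
  rintro _ ⟨T, -, rfl⟩ -
  have hdisj : Set.Pairwise (T.toFinset : Set ι) (Function.onFun Disjoint fun i => B ⁻¹' {i}) :=
    fun i _ j _ hij => (disjoint_singleton.2 hij).preimage B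
  rw [← biUnion_preimage_singleton, ← Set.coe_toFinset T]
  simp only [Finset.mem_coe]
  rw [integral_biUnion_finset _ (fun i _ => hfiber i) hdisj fun i _ => hkB.integrableOn,
    integral_biUnion_finset _ (fun i _ => hfiber i) hdisj fun i _ => hf.integrableOn]
  refine Finset.sum_congr rfl fun i _ => ?_
  rw [hk i, setIntegral_congr_fun (hfiber i) (g := fun _ => k i) fun ω hω => by
    simp only [Function.comp_apply, mem_preimage.1 hω |> mem_singleton_iff.1],
    setIntegral_const]

lemma comap_comp_bool_of_ne {β : Type*} [MeasurableSpace β] [MeasurableSingletonClass β]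
    {φ : Bool → β} (hφ : φ true ≠ φ false) {γ : Type*} (B : γ → Bool) :
    MeasurableSpace.comap (fun ω => φ (B ω)) inferInstance =
      MeasurableSpace.comap B inferInstance := by
  change MeasurableSpace.comap (φ ∘ B) _ = _
  rw [← MeasurableSpace.comap_comp]
  congr 1
  refine le_antisymm (measurable_of_finite φ).comap_le fun T _ => ?_
  exact ⟨φ '' T, (T.toFinite.image φ).measurableSet,
    preimage_image_eq T (Bool.injective_iff.2 hφ.symm)⟩

lemma comap_comp_bool_of_separates {β : Type*} [MeasurableSpace β] {φ : Bool → β}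
    {ψ : β → ℝ} (hψ : Measurable ψ) (hne : ψ (φ true) ≠ ψ (φ false)) {γ : Type*}
    (B : γ → Bool) :
    MeasurableSpace.comap (fun ω => φ (B ω)) inferInstance =
      MeasurableSpace.comap B inferInstance := by
  refine le_antisymm ((measurable_of_finite φ).comp (comap_measurable B)).comap_le ?_
  rw [← comap_comp_bool_of_ne (φ := fun b => ψ (φ b)) hne B]
  exact (hψ.comp (comap_measurable _)).comap_le

lemma comap_comp_bool_of_eq {β : Type*} [MeasurableSpace β] {φ : Bool → β}
    (hφ : φ true = φ false) {γ : Type*} (B : γ → Bool) :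
    MeasurableSpace.comap (fun ω => φ (B ω)) inferInstance = ⊥ := by
  have : (fun ω => φ (B ω)) = fun _ => φ true := funext fun ω => by
    cases B ω
    exacts [hφ.symm, rfl]
  rw [this, MeasurableSpace.comap_const]

lemma condDistrib_eq_map_cond {β E : Type*} [MeasurableSpace β] [MeasurableSingletonClass β]
    [MeasurableSpace E] [StandardBorelSpace E] [Nonempty E] {μ : Measure Ω} [IsFiniteMeasure μ]
    {X : Ω → β} {Y : Ω → E} (hX : Measurable X) (hY : Measurable Y) {x : β}
    (hx : μ (X ⁻¹' {x}) ≠ 0) :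
    condDistrib Y X μ x = (μ[|X ⁻¹' {x}]).map Y := by
  ext s hs
  have hx' : μ.map X {x} ≠ 0 := by rwa [Measure.map_apply hX (measurableSet_singleton x)]
  rw [condDistrib_apply_of_ne_zero hY x hx', Measure.map_apply hX (measurableSet_singleton x),
    Measure.map_apply (hX.prodMk hY) ((measurableSet_singleton x).prod hs),
    Measure.map_apply hY hs, cond_apply (hX (measurableSet_singleton x)), mk_preimage_prod]

instance : IsProbabilityMeasure unif01 :=
  ⟨by rw [unif01, Measure.restrict_apply_univ, Real.volume_Icc, sub_zero, ENNReal.ofReal_one]⟩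

def labelledLaw (H : Bool → Measure ℝ) : Measure (Bool × ℝ) :=
  (2⁻¹ : ℝ≥0∞) •
    ((Measure.dirac true).prod (H true) + (Measure.dirac false).prod (H false))

/-- A point `((b, y), u)` consists of the forecast label `b`, the outcome `y` and the uniform
variable `u`. -/
def mixtureSpace (H : Bool → Measure ℝ) : Measure ((Bool × ℝ) × ℝ) :=
  (labelledLaw H).prod unif01

namespace mixtureSpace

variable {H : Bool → Measure ℝ} [∀ b, IsProbabilityMeasure (H b)]

lemma labelledLaw_singleton_prod (b : Bool) (s : Set ℝ) :
    labelledLaw H ({b} ×ˢ s) = 2⁻¹ * H b s := by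
  cases b <;> simp [labelledLaw, Measure.prod_prod]

instance : IsProbabilityMeasure (labelledLaw H) :=
  ⟨by simp [labelledLaw, ENNReal.inv_two_add_inv_two]⟩

instance : IsProbabilityMeasure (mixtureSpace H) := by
  unfold mixtureSpace
  infer_instance

lemma measure_label_outcome (b : Bool) (s : Set ℝ) :
    mixtureSpace H ((fun ω => ω.1.1) ⁻¹' {b} ∩ (fun ω => ω.1.2) ⁻¹' s) =
      2⁻¹ * H b s := by
  have : (fun ω : (Bool × ℝ) × ℝ => ω.1.1) ⁻¹' {b} ∩ (fun ω => ω.1.2) ⁻¹' s =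
      ({b} ×ˢ s) ×ˢ univ := by
    ext ω
    simp
  rw [this, mixtureSpace, Measure.prod_prod, measure_univ, mul_one, labelledLaw_singleton_prod]

lemma measure_label (b : Bool) : mixtureSpace H ((fun ω => ω.1.1) ⁻¹' {b}) = 2⁻¹ := by
  simpa using measure_label_outcome (H := H) b univ

lemma map_outcome :
    (mixtureSpace H).map (fun ω => ω.1.2) = (2⁻¹ : ℝ≥0∞) • (H true + H false) := by
  have : (fun ω : (Bool × ℝ) × ℝ => ω.1.2) = Prod.snd ∘ Prod.fst := rfl
  rw [this, ← Measure.map_map measurable_snd measurable_fst, mixtureSpace, Measure.map_fst_prod,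
    measure_univ, one_smul, labelledLaw, Measure.map_smul,
    Measure.map_add _ _ measurable_snd, Measure.map_snd_prod, Measure.map_snd_prod]
  simp

lemma map_outcome_cond_label (b : Bool) :
    ((mixtureSpace H)[|(fun ω => ω.1.1) ⁻¹' {b}]).map (fun ω => ω.1.2) = H b := by
  ext s hs
  rw [Measure.map_apply measurable_fst.snd hs,
    cond_apply (measurable_fst.fst (measurableSet_singleton b)),
    measure_label_outcome, measure_label, inv_inv, ← mul_assoc,
    ENNReal.mul_inv_cancel two_ne_zero ENNReal.ofNat_ne_top, one_mul]

lemma isPredictionSpace (G : Bool → Measure ℝ) [∀ b, IsProbabilityMeasure (G b)] :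
    IsPredictionSpace (mixtureSpace H) (fun ω => G ω.1.1) (fun ω => ω.1.2)
      (fun ω => ω.2) where
  isProb := inferInstance
  probF _ := inferInstance
  measF := (measurable_of_finite G).comp measurable_fst.fst
  measY := measurable_fst.snd
  measU := measurable_snd
  unifU := by rw [mixtureSpace, Measure.map_snd_prod, measure_univ, one_smul]
  indepU := by
    refine indep_of_indep_of_le_right ((IndepFun_iff_Indep _ _ _).1
      (indepFun_prod (μ := labelledLaw H) (ν := unif01) measurable_id measurable_id).symm)
      (sup_le ?_ ?_)
    · exact (((measurable_of_finite G).comp measurable_fst).comp (comap_measurable _)).comap_le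
    · exact (measurable_snd.comp (comap_measurable _)).comap_le

lemma measureReal_label (b : Bool) :
    (mixtureSpace H).real ((fun ω => ω.1.1) ⁻¹' {b}) = 2⁻¹ := by
  rw [measureReal_def, measure_label, ENNReal.toReal_inv, ENNReal.toReal_ofNat]

lemma measurableSet_outcome_le (c : Bool → ℝ) :
    MeasurableSet {ω : (Bool × ℝ) × ℝ | ω.1.2 ≤ c ω.1.1} :=
  measurableSet_le measurable_fst.snd ((measurable_of_finite c).comp measurable_fst.fst)

lemma setIntegral_indicator_outcome_le (c : Bool → ℝ) (b : Bool) :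
    ∫ ω in (fun ω => ω.1.1) ⁻¹' {b},
        Set.indicator {ω | ω.1.2 ≤ c ω.1.1} (fun _ => (1:ℝ)) ω ∂mixtureSpace H =
      2⁻¹ * cdfAt (H b) (c b) := by
  have hset : (fun ω : (Bool × ℝ) × ℝ => ω.1.1) ⁻¹' {b} ∩ {ω | ω.1.2 ≤ c ω.1.1} =
      (fun ω => ω.1.1) ⁻¹' {b} ∩ (fun ω => ω.1.2) ⁻¹' Iic (c b) := by
    ext ω
    simp +contextual
  rw [setIntegral_indicator (measurableSet_outcome_le c), hset, setIntegral_const, smul_eq_mul,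
    mul_one, measureReal_def, measure_label_outcome, ENNReal.toReal_mul, ENNReal.toReal_inv,
    ENNReal.toReal_ofNat, cdfAt]

lemma condExp_indicator_outcome_le_of_separates {β : Type*} [MeasurableSpace β]
    {φ : Bool → β} {ψ : β → ℝ} (hψ : Measurable ψ) (hne : ψ (φ true) ≠ ψ (φ false))
    (c : Bool → ℝ) :
    (mixtureSpace H)[Set.indicator {ω | ω.1.2 ≤ c ω.1.1} (fun _ => (1:ℝ)) |
        MeasurableSpace.comap (fun ω => φ ω.1.1) inferInstance] =ᵐ[mixtureSpace H]
      fun ω => cdfAt (H ω.1.1) (c ω.1.1) := by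
  rw [comap_comp_bool_of_separates hψ hne]
  exact condExp_comap_fintype_ae_eq (μ := mixtureSpace H) (k := fun b => cdfAt (H b) (c b))
    measurable_fst.fst
    ((integrable_const 1).indicator (measurableSet_outcome_le c))
    fun b => by rw [setIntegral_indicator_outcome_le, measureReal_label, smul_eq_mul]

lemma condExp_indicator_outcome_le_of_eq {β : Type*} [MeasurableSpace β] {φ : Bool → β}
    (hφ : φ true = φ false) (c : Bool → ℝ) :
    (mixtureSpace H)[Set.indicator {ω | ω.1.2 ≤ c ω.1.1} (fun _ => (1:ℝ)) |
        MeasurableSpace.comap (fun ω => φ ω.1.1) inferInstance] =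
      fun _ => (cdfAt (H true) (c true) + cdfAt (H false) (c false)) / 2 := by
  have hcompl :
      ((fun ω : (Bool × ℝ) × ℝ => ω.1.1) ⁻¹' {true})ᶜ = (fun ω => ω.1.1) ⁻¹' {false} := by
    ext ω
    simp
  rw [comap_comp_bool_of_eq hφ, condExp_bot, ← integral_add_compl
    (measurable_fst.fst (measurableSet_singleton true))
    ((integrable_const 1).indicator (measurableSet_outcome_le c)), hcompl,
    setIntegral_indicator_outcome_le, setIntegral_indicator_outcome_le]
  ext
  ring

lemma condDistrib_outcome_of_ne {β : Type*} [MeasurableSpace β] [MeasurableSingletonClass β]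
    {φ : Bool → β} (hφ : φ true ≠ φ false) (b : Bool) :
    condDistrib (fun ω => ω.1.2) (fun ω => φ ω.1.1) (mixtureSpace H) (φ b) = H b := by
  have hpre :
      (fun ω : (Bool × ℝ) × ℝ => φ ω.1.1) ⁻¹' {φ b} = (fun ω => ω.1.1) ⁻¹' {b} := by
    ext ω
    simp [(Bool.injective_iff.2 hφ.symm).eq_iff]
  have hX : Measurable fun ω : (Bool × ℝ) × ℝ => φ ω.1.1 :=
    (measurable_of_finite φ).comp measurable_fst.fst
  rw [condDistrib_eq_map_cond hX measurable_fst.snd (by rw [hpre, measure_label]; norm_num),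
    hpre, map_outcome_cond_label]

lemma condDistrib_outcome_of_eq {β : Type*} [MeasurableSpace β] [MeasurableSingletonClass β]
    {φ : Bool → β} (hφ : φ true = φ false) (b : Bool) :
    condDistrib (fun ω => ω.1.2) (fun ω => φ ω.1.1) (mixtureSpace H) (φ b) =
      (2⁻¹ : ℝ≥0∞) • (H true + H false) := by
  have hconst (b' : Bool) : φ b' = φ b := by
    cases b' <;> cases b <;> simp [hφ]
  have hpre : (fun ω : (Bool × ℝ) × ℝ => φ ω.1.1) ⁻¹' {φ b} = univ := by
    ext ω
    simp [hconst]
  have hX : Measurable fun ω : (Bool × ℝ) × ℝ => φ ω.1.1 :=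
    (measurable_of_finite φ).comp measurable_fst.fst
  rw [condDistrib_eq_map_cond hX measurable_fst.snd (by simp [hpre]), hpre, cond_univ, map_outcome]

end mixtureSpace

namespace mixtureSpace

variable {G H : Bool → Measure ℝ} {α : ℝ}

lemma cdfAt_lowerQuantile_of_ne (hG : ∀ b, IsUnitIntervalLaw (G b))
    (hsep : ∀ b x, cdfAt (G true) x ≠ cdfAt (G false) x → cdfAt (H b) x = cdfAt (G b) x)
    (hα : α ∈ Ioo 0 1) (hq : lowerQuantile (G true) α ≠ lowerQuantile (G false) α)
    (b : Bool) :
    cdfAt (H b) (lowerQuantile (G b) α) = α := by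
  have hb := (hG b).cdfAt_lowerQuantile hα
  rw [hsep b _ fun heq => hq ?_, hb]
  cases b
  · exact (hG true).lowerQuantile_eq hα (heq.trans hb)
  · exact ((hG false).lowerQuantile_eq hα (heq.symm.trans hb)).symm

lemma average_cdfAt_lowerQuantile_of_eq (hG : ∀ b, IsUnitIntervalLaw (G b))
    (hsum : ∀ x, cdfAt (H true) x + cdfAt (H false) x = cdfAt (G true) x + cdfAt (G false) x)
    (hα : α ∈ Ioo 0 1) (hq : lowerQuantile (G true) α = lowerQuantile (G false) α) :
    (cdfAt (H true) (lowerQuantile (G true) α) + cdfAt (H false) (lowerQuantile (G false) α)) / 2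
      = α := by
  rw [← hq, hsum, (hG true).cdfAt_lowerQuantile hα, hq, (hG false).cdfAt_lowerQuantile hα]
  ring

lemma cepCalibrated (hG : ∀ b, IsUnitIntervalLaw (G b)) [∀ b, IsProbabilityMeasure (H b)]
    (hsum : ∀ x, cdfAt (H true) x + cdfAt (H false) x = cdfAt (G true) x + cdfAt (G false) x)
    (hsep : ∀ b x, cdfAt (G true) x ≠ cdfAt (G false) x → cdfAt (H b) x = cdfAt (G b) x) :
    CEPCalibrated (mixtureSpace H) (fun ω => G ω.1.1) (fun ω => ω.1.2) (fun ω => ω.2) := by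
  intro α hα
  have := fun b => (hG b).nullSingletonClass
  set q : Bool → ℝ := fun b => lowerQuantile (G b) α
  have hPIT :
      {ω : (Bool × ℝ) × ℝ | PIT (fun ω => G ω.1.1) (fun ω => ω.1.2) (fun ω => ω.2) ω ≤ α} =
        {ω | ω.1.2 ≤ q ω.1.1} := by
    ext ω
    rw [mem_ofPred_eq, PIT_eq_cdfAt]
    exact Set.ext_iff.1 ((hG _).setOf_cdfAt_le hα ((hG _).cdfAt_lowerQuantile hα)) _
  rw [hPIT]
  rcases eq_or_ne (q true) (q false) with hq | hq
  · rw [condExp_indicator_outcome_le_of_eq (φ := q) hq q,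
      average_cdfAt_lowerQuantile_of_eq hG hsum hα hq]
  · refine (condExp_indicator_outcome_le_of_separates (φ := q) measurable_id hq q).trans ?_
    exact .of_forall fun ω => cdfAt_lowerQuantile_of_ne hG hsep hα hq ω.1.1

lemma threshCalibrated [∀ b, IsProbabilityMeasure (H b)]
    (hsum : ∀ x, cdfAt (H true) x + cdfAt (H false) x = cdfAt (G true) x + cdfAt (G false) x)
    (hsep : ∀ b x, cdfAt (G true) x ≠ cdfAt (G false) x → cdfAt (H b) x = cdfAt (G b) x) :
    ThreshCalibrated (mixtureSpace H) (fun ω => G ω.1.1) (fun ω => ω.1.2) := by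
  intro t
  rcases eq_or_ne (cdfAt (G true) t) (cdfAt (G false) t) with ht | ht
  · rw [condExp_indicator_outcome_le_of_eq (φ := fun b => cdfAt (G b) t) ht fun _ => t, hsum]
    have hmean (b : Bool) : (cdfAt (G true) t + cdfAt (G false) t) / 2 = cdfAt (G b) t := by
      cases b <;> rw [ht] <;> ring
    exact .of_forall fun ω => hmean ω.1.1
  · refine (condExp_indicator_outcome_le_of_separates (φ := fun b => cdfAt (G b) t)
      measurable_id ht fun _ => t).trans (.of_forall fun ω => hsep ω.1.1 t ht)

lemma quantileCalibrated [∀ b, IsProbabilityMeasure (H b)] (hG : ∀ b, IsUnitIntervalLaw (G b))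
    (hH : ∀ b, IsUnitIntervalLaw (H b))
    (hsum : ∀ x, cdfAt (H true) x + cdfAt (H false) x = cdfAt (G true) x + cdfAt (G false) x)
    (hsep : ∀ b x, cdfAt (G true) x ≠ cdfAt (G false) x → cdfAt (H b) x = cdfAt (G b) x) :
    QuantileCalibrated (mixtureSpace H) (fun ω => G ω.1.1) (fun ω => ω.1.2) := by
  intro α hα
  set φ : Bool → ℝ × ℝ := fun b => (lowerQuantile (G b) α, upperQuantile (G b) α)
  have hquantiles (b : Bool) {K : Measure ℝ} (hK : IsUnitIntervalLaw K)
      (hKq : cdfAt K (lowerQuantile (G b) α) = α) :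
      lowerQuantile K α = lowerQuantile (G b) α ∧ upperQuantile K α = upperQuantile (G b) α :=
    ⟨hK.lowerQuantile_eq hα hKq,
      (hK.upperQuantile_eq hα hKq).trans ((hG b).upperQuantile_eq_lowerQuantile hα).symm⟩
  have hpair : qPairOf (fun ω : (Bool × ℝ) × ℝ => G ω.1.1) α = fun ω => φ ω.1.1 := rfl
  refine .of_forall fun ω => ?_
  rw [hpair]
  beta_reduce
  generalize ω.1.1 = b
  rcases eq_or_ne (lowerQuantile (G true) α) (lowerQuantile (G false) α) with hq | hq
  · have hφ : φ true = φ false := by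
      simp only [φ, (hG _).upperQuantile_eq_lowerQuantile hα, hq]
    have hMq := average_cdfAt_lowerQuantile_of_eq hG hsum hα hq
    rw [condDistrib_outcome_of_eq hφ]
    refine hquantiles b ((hH true).half_smul_add (hH false)) ?_
    rw [cdfAt_half_smul_add]
    cases b
    · rwa [hq] at hMq
    · rwa [← hq] at hMq
  · rw [condDistrib_outcome_of_ne fun h => hq (congrArg Prod.fst h)]
    exact hquantiles b (hH b) (cdfAt_lowerQuantile_of_ne hG hsep hα hq b)

lemma not_autoCalibrated [∀ b, IsProbabilityMeasure (H b)] {y₀ : ℝ}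
    (hy₀ : cdfAt (G true) y₀ ≠ cdfAt (G false) y₀) {b : Bool} {y : ℝ}
    (hy : cdfAt (H b) y ≠ cdfAt (G b) y) :
    ¬ AutoCalibrated (mixtureSpace H) (fun ω => G ω.1.1) (fun ω => ω.1.2) := by
  intro hauto
  have hψ : Measurable fun m : Measure ℝ => cdfAt m y₀ :=
    ENNReal.measurable_toReal.comp (Measure.measurable_coe measurableSet_Iic)
  have hae := (hauto y).trans
    (condExp_indicator_outcome_le_of_separates (φ := G) hψ hy₀ fun _ => y)
  have hnull : mixtureSpace H ((fun ω => ω.1.1) ⁻¹' {b}) = 0 :=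
    measure_mono_null (fun ω (hω : ω.1.1 = b) =>
      show cdfAt (G ω.1.1) y ≠ cdfAt (H ω.1.1) y from hω ▸ hy.symm) (ae_iff.1 hae)
  rw [measure_label] at hnull
  exact ENNReal.inv_ne_zero.2 ENNReal.ofNat_ne_top hnull

end mixtureSpace

lemma csi_of_isUnitIntervalLaw {𝓕 : Set (Measure ℝ)}
    (h𝓕 : ∀ G ∈ 𝓕, IsUnitIntervalLaw G) : CSI 𝓕 :=
  ⟨Icc 0 1, nonempty_Icc.2 zero_le_one, ordConnected_Icc, fun G hG =>
    ⟨(h𝓕 G hG).continuous_cdfAt, (h𝓕 G hG).strictMonoOn_cdfAt,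
      (h𝓕 G hG).measure_compl_Icc⟩⟩

def forecastLaw : Bool → Measure ℝ
  | true => quarterMix 1 1 1 1
  | false => quarterMix 1 1 (1/2) (3/2)

def outcomeLaw : Bool → Measure ℝ
  | true => quarterMix (1/2) (3/2) 1 1
  | false => quarterMix (3/2) (1/2) (1/2) (3/2)

lemma isUnitIntervalLaw_forecastLaw (b : Bool) : IsUnitIntervalLaw (forecastLaw b) := by
  cases b <;> exact quarterMix.isUnitIntervalLaw (by norm_num) (by norm_num) (by norm_num)
    (by norm_num) (by norm_num)

lemma isUnitIntervalLaw_outcomeLaw (b : Bool) : IsUnitIntervalLaw (outcomeLaw b) := by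
  cases b <;> exact quarterMix.isUnitIntervalLaw (by norm_num) (by norm_num) (by norm_num)
    (by norm_num) (by norm_num)

instance (b : Bool) : IsProbabilityMeasure (forecastLaw b) :=
  (isUnitIntervalLaw_forecastLaw b).isProbabilityMeasure

instance (b : Bool) : IsProbabilityMeasure (outcomeLaw b) :=
  (isUnitIntervalLaw_outcomeLaw b).isProbabilityMeasure

lemma cdfAt_outcomeLaw_add (x : ℝ) :
    cdfAt (outcomeLaw true) x + cdfAt (outcomeLaw false) x =
      cdfAt (forecastLaw true) x + cdfAt (forecastLaw false) x := by
  simp only [outcomeLaw, forecastLaw, quarterMix.cdfAt_eq]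
  push_cast
  ring

lemma cdfAt_outcomeLaw_of_ne (b : Bool) (x : ℝ)
    (hx : cdfAt (forecastLaw true) x ≠ cdfAt (forecastLaw false) x) :
    cdfAt (outcomeLaw b) x = cdfAt (forecastLaw b) x := by
  rcases le_total x (1/2) with hx' | hx'
  · refine absurd ?_ hx
    simp only [forecastLaw, quarterMix.cdfAt_eq, ramp_of_le hx',
      ramp_of_le (hx'.trans (by norm_num : (1/2 : ℝ) ≤ 3/4))]
    push_cast
    ring
  · have h₀ : ramp 0 (1/4) x = 1/4 := by rw [ramp_of_ge (by norm_num) (by linarith)]; norm_num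
    have h₁ : ramp (1/4) (1/2) x = 1/4 := by rw [ramp_of_ge (by norm_num) hx']; norm_num
    cases b <;>
    · simp only [forecastLaw, outcomeLaw, quarterMix.cdfAt_eq, h₀, h₁]
      push_cast
      ring

lemma cdfAt_forecastLaw_three_quarters :
    cdfAt (forecastLaw true) (3/4) ≠ cdfAt (forecastLaw false) (3/4) := by
  norm_num [forecastLaw, quarterMix.cdfAt_eq, ramp]

lemma cdfAt_outcomeLaw_quarter :
    cdfAt (outcomeLaw true) (1/4) ≠ cdfAt (forecastLaw true) (1/4) := by
  norm_num [forecastLaw, outcomeLaw, quarterMix.cdfAt_eq, ramp]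

/-- **Theorem (Statement 15).** There is a prediction space in which `F` takes only two
values, both continuous strictly increasing CDFs on a shared support interval, such that
`F` is simultaneously CEP, quantile, and threshold calibrated, but not auto-calibrated. -/
theorem exists_cep_quantile_threshold_not_auto :
    ∃ (Ω : Type) (_ : MeasurableSpace Ω) (μ : Measure Ω) (hμ : IsProbabilityMeasure μ)
      (F : Ω → Measure ℝ) (Y U : Ω → ℝ),
      IsPredictionSpace μ F Y U ∧
      (∃ G₁ G₂ : Measure ℝ, G₁ ≠ G₂ ∧ (∀ ω, F ω = G₁ ∨ F ω = G₂) ∧ CSI {G₁, G₂}) ∧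
      CEPCalibrated μ F Y U ∧
      (@QuantileCalibrated Ω _ μ ⟨hμ.measure_univ ▸ ENNReal.one_lt_top⟩ F Y) ∧
      ThreshCalibrated μ F Y ∧
      ¬ AutoCalibrated μ F Y := by
  refine ⟨(Bool × ℝ) × ℝ, inferInstance, mixtureSpace outcomeLaw, inferInstance,
    fun ω => forecastLaw ω.1.1, fun ω => ω.1.2, fun ω => ω.2,
    mixtureSpace.isPredictionSpace forecastLaw,
    ⟨forecastLaw true, forecastLaw false, fun h => cdfAt_forecastLaw_three_quarters (by rw [h]),
      fun ω => by rcases ω with ⟨⟨_ | _, _⟩, _⟩ <;> simp,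
      csi_of_isUnitIntervalLaw (by rintro G (rfl | rfl) <;> apply isUnitIntervalLaw_forecastLaw)⟩,
    mixtureSpace.cepCalibrated isUnitIntervalLaw_forecastLaw cdfAt_outcomeLaw_add
      cdfAt_outcomeLaw_of_ne,
    mixtureSpace.quantileCalibrated isUnitIntervalLaw_forecastLaw isUnitIntervalLaw_outcomeLaw
      cdfAt_outcomeLaw_add cdfAt_outcomeLaw_of_ne,
    mixtureSpace.threshCalibrated cdfAt_outcomeLaw_add cdfAt_outcomeLaw_of_ne,
    mixtureSpace.not_autoCalibrated cdfAt_forecastLaw_three_quarters cdfAt_outcomeLaw_quarter⟩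

end
end

section
/- Let 𝓕 be a convex class of probability measures on ℝ containing all Dirac measures δ_y. Suppose the functional T is induced on 𝓕 by an identification function of prediction error form, V(x,y) = v(x−y), where v is increasing and left-continuous with v(−r) < 0 and v(r) > 0 for some r > 0. Then any other identification function of prediction error form (with these same properties) that induces T on 𝓕 equals a positive constant multiple of V. -/
open MeasureTheory ProbabilityTheory

noncomputable section

variable {Ω : Type*} [MeasurableSpace Ω]

/-
Evaluating `T^-` on the two-point laws `p δ_{-a} + (1 - p) δ_{-b}` shows that whenever
`p v(a) + (1 - p) v(b) < 0`, also `p v'(a) + (1 - p) v'(b) ≤ 0`, and vice versa: `x = 0` lies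
below `T^-` for `v`, hence for `v'`, and left-continuity gives the sign of the `v'`-mixture
there. For `v(a) < 0 < v(b)` take the weight `q` at which the `v`-mixture vanishes; letting the
weight tend to `q` from both sides, the `v'`-mixture at `q` vanishes as well, which forces
`v'(a) / v(a) = v'(b) / v(b)`. Hence `v'/v` is constant off the zeros of `v`, and `v, v'` share
their zeros.
-/

open Filter Topology Set

def twoPointLaw (a b p : ℝ) : Measure ℝ :=
  ENNReal.ofReal p • Measure.dirac a + ENNReal.ofReal (1 - p) • Measure.dirac b

def twoPointMix (f : ℝ → ℝ) (a b p : ℝ) : ℝ := p * f a + (1 - p) * f b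

theorem integral_twoPointLaw (f : ℝ → ℝ) (a b : ℝ) {p : ℝ} (hp0 : 0 ≤ p)
    (hp1 : p ≤ 1) :
    ∫ y, f y ∂twoPointLaw a b p = twoPointMix f a b p := by
  have hint : ∀ c, Integrable f (Measure.dirac c) := fun c => integrable_dirac enorm_lt_top
  rw [twoPointLaw, integral_add_measure ((hint a).smul_measure ENNReal.ofReal_ne_top)
      ((hint b).smul_measure ENNReal.ofReal_ne_top), integral_smul_measure,
    integral_smul_measure, integral_dirac, integral_dirac, ENNReal.toReal_ofReal hp0,
    ENNReal.toReal_ofReal (by linarith), smul_eq_mul, smul_eq_mul, twoPointMix]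

theorem Tminus_twoPointLaw (v : ℝ → ℝ) (a b : ℝ) {p : ℝ} (hp0 : 0 ≤ p) (hp1 : p ≤ 1) :
    Tminus (fun x y => v (x - y)) (twoPointLaw (-a) (-b) p)
      = sSup {x | twoPointMix v (x + a) (x + b) p < 0} := by
  simp only [Tminus, integral_twoPointLaw _ _ _ hp0 hp1, twoPointMix, sub_neg_eq_add]

theorem apply_sSup_setOf_neg_nonpos {h : ℝ → ℝ} (hne : {x | h x < 0}.Nonempty)
    (hbdd : BddAbove {x | h x < 0})
    (hlc : ContinuousWithinAt h (Iic (sSup {x | h x < 0})) (sSup {x | h x < 0})) :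
    h (sSup {x | h x < 0}) ≤ 0 := by
  have hmem := (hlc.mono fun _ hx => le_csSup hbdd hx).mem_closure
    (csSup_mem_closure hne hbdd) (t := Iic 0) fun _ hx => le_of_lt hx
  rwa [closure_Iic] at hmem

theorem bddAbove_setOf_neg_of_monotone {h : ℝ → ℝ} (hh : Monotone h) {r : ℝ}
    (hr : 0 < h r) : BddAbove {x | h x < 0} :=
  ⟨r, fun _ hx => le_of_not_gt fun hrx => (hr.trans_le (hh hrx.le)).not_gt hx⟩

theorem nonpos_of_forall_weight_Ioc {A B : ℝ}
    (h : ∀ t ∈ Ioc (0 : ℝ) 1, t * A + (1 - t) * B ≤ 0) : B ≤ 0 := by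
  have hlim : Tendsto (fun t : ℝ => t * A + (1 - t) * B) (𝓝[>] 0) (𝓝 B) := by
    have hcont : Continuous fun t : ℝ => t * A + (1 - t) * B := by fun_prop
    simpa using (hcont.tendsto 0).mono_left nhdsWithin_le_nhds
  exact le_of_tendsto hlim (eventually_of_mem (Ioc_mem_nhdsGT one_pos) h)

namespace twoPointMix

variable {f : ℝ → ℝ} {a b p : ℝ}

theorem le_of_monotone (hf : Monotone f) (hp0 : 0 ≤ p) (hp1 : p ≤ 1) :
    twoPointMix f a b p ≤ f (max a b) := by
  have := hf (le_max_left a b)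
  have := hf (le_max_right a b)
  unfold twoPointMix
  nlinarith

theorem ge_of_monotone (hf : Monotone f) (hp0 : 0 ≤ p) (hp1 : p ≤ 1) :
    f (min a b) ≤ twoPointMix f a b p := by
  have := hf (min_le_left a b)
  have := hf (min_le_right a b)
  unfold twoPointMix
  nlinarith

theorem monotone_shift (hf : Monotone f) (hp0 : 0 ≤ p) (hp1 : p ≤ 1) :
    Monotone fun x => twoPointMix f (x + a) (x + b) p := by
  intro x y hxy
  have := hf (show x + a ≤ y + a by linarith)
  have := hf (show x + b ≤ y + b by linarith)
  simp only [twoPointMix]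
  nlinarith

theorem continuousWithinAt_Iic_shift (hf : ∀ x, ContinuousWithinAt f (Iic x) x) (x : ℝ) :
    ContinuousWithinAt (fun x => twoPointMix f (x + a) (x + b) p) (Iic x) x := by
  have hshift : ∀ c, ContinuousWithinAt (fun x => f (x + c)) (Iic x) x := fun c =>
    (hf (x + c)).comp (f := fun t => t + c) (continuous_add_const c).continuousWithinAt
      fun t ht => by simp only [mem_Iic] at ht ⊢; linarith
  exact (continuousWithinAt_const.mul (hshift a)).add
    (continuousWithinAt_const.mul (hshift b))

theorem bddAbove_setOf_shift_neg (hf : Monotone f) (hp0 : 0 ≤ p) (hp1 : p ≤ 1) {r : ℝ}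
    (hr : 0 < f r) : BddAbove {x | twoPointMix f (x + a) (x + b) p < 0} := by
  refine bddAbove_setOf_neg_of_monotone (monotone_shift hf hp0 hp1) (r := r - min a b) ?_
  calc 0 < f r := hr
    _ ≤ f (min (r - min a b + a) (r - min a b + b)) :=
      hf (le_min (by linarith [min_le_left a b]) (by linarith [min_le_right a b]))
    _ ≤ _ := ge_of_monotone hf hp0 hp1

theorem nonempty_setOf_shift_neg (hf : Monotone f) (hp0 : 0 ≤ p) (hp1 : p ≤ 1) {s : ℝ}
    (hs : f s < 0) : {x | twoPointMix f (x + a) (x + b) p < 0}.Nonempty := by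
  refine ⟨s - max a b, ?_⟩
  calc twoPointMix f (s - max a b + a) (s - max a b + b) p
      ≤ f (max (s - max a b + a) (s - max a b + b)) := le_of_monotone hf hp0 hp1
    _ ≤ f s := hf (max_le (by linarith [le_max_left a b]) (by linarith [le_max_right a b]))
    _ < 0 := hs

theorem neg_apply : twoPointMix (-f) a b p = -twoPointMix f a b p := by
  simp only [twoPointMix, Pi.neg_apply]; ring

theorem swap : twoPointMix f b a (1 - p) = twoPointMix f a b p := by
  simp only [twoPointMix]; ring

end twoPointMix

def SignCompatible (v w : ℝ → ℝ) : Prop :=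
  ∀ a b p, 0 ≤ p → p ≤ 1 → twoPointMix v a b p < 0 → twoPointMix w a b p ≤ 0

theorem signCompatible_of_Tminus_eq {v w : ℝ → ℝ} (hv : Monotone v) (hw : Monotone w)
    (hwlc : ∀ x, ContinuousWithinAt w (Iic x) x) {r s t : ℝ} (hvr : 0 < v r) (hws : w s < 0)
    (hwt : 0 < w t)
    (hT : ∀ a b p, 0 ≤ p → p ≤ 1 → Tminus (fun x y => v (x - y)) (twoPointLaw a b p)
      = Tminus (fun x y => w (x - y)) (twoPointLaw a b p)) :
    SignCompatible v w := by
  intro a b p hp0 hp1 hneg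
  have hvbdd := twoPointMix.bddAbove_setOf_shift_neg (a := a) (b := b) hv hp0 hp1 hvr
  have hwbdd := twoPointMix.bddAbove_setOf_shift_neg (a := a) (b := b) hw hp0 hp1 hwt
  have hwne := twoPointMix.nonempty_setOf_shift_neg (a := a) (b := b) hw hp0 hp1 hws
  have h0 : 0 ≤ sSup {x | twoPointMix v (x + a) (x + b) p < 0} :=
    le_csSup hvbdd (show twoPointMix v (0 + a) (0 + b) p < 0 by simpa only [zero_add] using hneg)
  have hsup := hT (-a) (-b) p hp0 hp1
  rw [Tminus_twoPointLaw _ _ _ hp0 hp1, Tminus_twoPointLaw _ _ _ hp0 hp1] at hsup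
  have hw0 := (twoPointMix.monotone_shift hw hp0 hp1 (hsup ▸ h0)).trans
    (apply_sSup_setOf_neg_nonpos hwne hwbdd (twoPointMix.continuousWithinAt_Iic_shift hwlc _))
  simpa only [zero_add] using hw0

namespace SignCompatible

variable {v w : ℝ → ℝ} {a b q x : ℝ}

theorem neg (h : SignCompatible v w) : SignCompatible (-w) (-v) := by
  intro a b p hp0 hp1 hneg
  rw [twoPointMix.neg_apply] at hneg ⊢
  by_contra hpos
  exact (h a b p hp0 hp1 (by linarith)).not_gt (by linarith)

theorem apply_nonpos (h : SignCompatible v w) (hx : v x < 0) : w x ≤ 0 := by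
  simpa [twoPointMix] using h x x 1 zero_le_one le_rfl (by simpa [twoPointMix] using hx)

theorem twoPointMix_nonpos_of_eq_zero (h : SignCompatible v w) (ha : v a < 0) (hq0 : 0 ≤ q)
    (hq1 : q ≤ 1) (hq : twoPointMix v a b q = 0) : twoPointMix w a b q ≤ 0 := by
  have hmove : ∀ (f : ℝ → ℝ) (t : ℝ),
      twoPointMix f a b (t + (1 - t) * q) = t * f a + (1 - t) * twoPointMix f a b q := by
    intro f t; simp only [twoPointMix]; ring
  refine nonpos_of_forall_weight_Ioc (A := w a) fun t ht => ?_
  rw [← hmove]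
  refine h a b _ (by nlinarith [ht.1, ht.2]) (by nlinarith [ht.1, ht.2]) ?_
  rw [hmove, hq, mul_zero, add_zero]
  exact mul_neg_of_pos_of_neg ht.1 ha

theorem twoPointMix_eq_zero (hvw : SignCompatible v w) (hwv : SignCompatible w v) (ha : v a < 0)
    (hb : 0 < v b) (hq0 : 0 ≤ q) (hq1 : q ≤ 1) (hq : twoPointMix v a b q = 0) :
    twoPointMix w a b q = 0 := by
  refine le_antisymm (hvw.twoPointMix_nonpos_of_eq_zero ha hq0 hq1 hq) ?_
  have hneg := hwv.neg.twoPointMix_nonpos_of_eq_zero (a := b) (b := a) (q := 1 - q)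
    (by simpa using hb) (by linarith) (by linarith)
    (by rw [twoPointMix.swap, twoPointMix.neg_apply, hq, neg_zero])
  rw [twoPointMix.swap, twoPointMix.neg_apply] at hneg
  linarith

theorem mul_eq_mul (hvw : SignCompatible v w) (hwv : SignCompatible w v) (ha : v a < 0)
    (hb : 0 < v b) : v b * w a = v a * w b := by
  have hden : 0 < v b - v a := by linarith
  set q := v b / (v b - v a) with hq_def
  have hq : twoPointMix v a b q = 0 := by
    simp only [twoPointMix, hq_def]; field_simp; ring
  have hq0 : 0 < q := div_pos hb hden
  have hwq := twoPointMix_eq_zero hvw hwv ha hb hq0.le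
    ((div_le_one hden).mpr (by linarith)) hq
  simp only [twoPointMix] at hq hwq
  have hprod : q * (v b * w a - v a * w b) = 0 := by linear_combination v b * hwq - w b * hq
  linarith [(mul_eq_zero.mp hprod).resolve_left hq0.ne']

theorem pos_of_pos (hwv : SignCompatible w v) {s : ℝ} (hs : w s < 0) (hx : 0 < v x) :
    0 < w x := by
  refine lt_of_le_of_ne (not_lt.mp fun hneg => hx.not_ge (hwv.apply_nonpos hneg)) fun h0 => ?_
  have hvx := hwv.twoPointMix_nonpos_of_eq_zero (b := x) hs le_rfl zero_le_one
    (by simp [twoPointMix, ← h0])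
  simp only [twoPointMix] at hvx
  linarith

theorem eq_zero (hvw : SignCompatible v w) (hwv : SignCompatible w v) (ha : v a < 0)
    (hb : 0 < v b) (hx : v x = 0) : w x = 0 := by
  have hle := hvw.twoPointMix_nonpos_of_eq_zero (b := x) ha le_rfl zero_le_one
    (by simp [twoPointMix, hx])
  have hge := hwv.neg.twoPointMix_nonpos_of_eq_zero (a := b) (b := x) (by simpa using hb) le_rfl
    zero_le_one (by simp [twoPointMix, hx])
  simp only [twoPointMix, Pi.neg_apply] at hle hge
  linarith

theorem exists_pos_mul_eq (hvw : SignCompatible v w) (hwv : SignCompatible w v) (ha : v a < 0)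
    (hb : 0 < v b) {s : ℝ} (hs : w s < 0) : ∃ c, 0 < c ∧ ∀ x, w x = c * v x := by
  refine ⟨w b / v b, div_pos (hwv.pos_of_pos hs hb) hb, fun x => ?_⟩
  rw [div_mul_eq_mul_div, eq_div_iff hb.ne']
  rcases lt_trichotomy (v x) 0 with hx | hx | hx
  · linarith [mul_eq_mul hvw hwv hx hb]
  · rw [eq_zero hvw hwv ha hb hx, hx]; ring
  · have h1 := mul_eq_mul hvw hwv ha hx
    have h2 := mul_eq_mul hvw hwv ha hb
    exact mul_left_cancel₀ ha.ne (by linear_combination v x * h2 - v b * h1)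

end SignCompatible

theorem identification_function_unique_up_to_positive_constant_general
    (𝓕 : Set (Measure ℝ))
    (hconv : ∀ G₁ ∈ 𝓕, ∀ G₂ ∈ 𝓕, ∀ p : ℝ, 0 ≤ p → p ≤ 1 →
      ENNReal.ofReal p • G₁ + ENNReal.ofReal (1 - p) • G₂ ∈ 𝓕)
    (hdirac : ∀ y : ℝ, Measure.dirac y ∈ 𝓕)
    (v v' : ℝ → ℝ)
    (hv : Monotone v) (hvlc : ∀ x : ℝ, ContinuousWithinAt v (Set.Iic x) x)
    (hvsign : ∃ r : ℝ, 0 < r ∧ v (-r) < 0 ∧ 0 < v r)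
    (hv' : Monotone v') (hv'lc : ∀ x : ℝ, ContinuousWithinAt v' (Set.Iic x) x)
    (hv'sign : ∃ r : ℝ, 0 < r ∧ v' (-r) < 0 ∧ 0 < v' r)
    -- both identification functions induce the same functional on `𝓕`:
    (hsame : ∀ G ∈ 𝓕,
      Tminus (fun x y => v (x - y)) G = Tminus (fun x y => v' (x - y)) G ∧
      Tplus (fun x y => v (x - y)) G = Tplus (fun x y => v' (x - y)) G) :
    ∃ c : ℝ, 0 < c ∧ ∀ r : ℝ, v' r = c * v r := by
  obtain ⟨r, -, hvr_neg, hvr_pos⟩ := hvsign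
  obtain ⟨r', -, hv'r_neg, hv'r_pos⟩ := hv'sign
  have hT : ∀ a b p, 0 ≤ p → p ≤ 1 → Tminus (fun x y => v (x - y)) (twoPointLaw a b p)
      = Tminus (fun x y => v' (x - y)) (twoPointLaw a b p) := fun a b p hp0 hp1 =>
    (hsame _ (hconv _ (hdirac a) _ (hdirac b) p hp0 hp1)).1
  exact SignCompatible.exists_pos_mul_eq
    (signCompatible_of_Tminus_eq hv hv' hv'lc hvr_pos hv'r_neg hv'r_pos hT)
    (signCompatible_of_Tminus_eq hv' hv hvlc hv'r_pos hvr_neg hvr_pos fun a b p hp0 hp1 =>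
      (hT a b p hp0 hp1).symm)
    hvr_neg hvr_pos hv'r_neg

/-- **Theorem (Statement 17).** On a convex class of probability measures containing all
Dirac measures, an identification function of prediction error form that induces a given
functional is unique up to multiplication by a positive constant. -/
theorem identification_function_unique_up_to_positive_constant
    (𝓕 : Set (Measure ℝ))
    (hprob : ∀ G ∈ 𝓕, IsProbabilityMeasure G)
    (hconv : ∀ G₁ ∈ 𝓕, ∀ G₂ ∈ 𝓕, ∀ p : ℝ, 0 ≤ p → p ≤ 1 →
      ENNReal.ofReal p • G₁ + ENNReal.ofReal (1 - p) • G₂ ∈ 𝓕)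
    (hdirac : ∀ y : ℝ, Measure.dirac y ∈ 𝓕)
    (v v' : ℝ → ℝ)
    (hv : Monotone v) (hvlc : ∀ x : ℝ, ContinuousWithinAt v (Set.Iic x) x)
    (hvsign : ∃ r : ℝ, 0 < r ∧ v (-r) < 0 ∧ 0 < v r)
    (hv' : Monotone v') (hv'lc : ∀ x : ℝ, ContinuousWithinAt v' (Set.Iic x) x)
    (hv'sign : ∃ r : ℝ, 0 < r ∧ v' (-r) < 0 ∧ 0 < v' r)
    (hvint : ∀ G ∈ 𝓕, ∀ x : ℝ, Integrable (fun y => v (x - y)) G)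
    (hv'int : ∀ G ∈ 𝓕, ∀ x : ℝ, Integrable (fun y => v' (x - y)) G)
    -- both identification functions induce the same functional on `𝓕`:
    (hsame : ∀ G ∈ 𝓕,
      Tminus (fun x y => v (x - y)) G = Tminus (fun x y => v' (x - y)) G ∧
      Tplus (fun x y => v (x - y)) G = Tplus (fun x y => v' (x - y)) G) :
    ∃ c : ℝ, 0 < c ∧ ∀ r : ℝ, v' r = c * v r :=
  identification_function_unique_up_to_positive_constant_general 𝓕 hconv hdirac v v' hv hvlc hvsign
    hv' hv'lc hv'sign hsame

end
end

section
/- In a prediction space, if the predictive distribution F is probabilistically calibrated, then for every α ∈ (0,1) the induced quantile forecasts are unconditionally calibrated: Q(Y ≤ q_α^-(F)) ≥ α and Q(Y ≥ q_α^+(F)) ≥ 1 − α. -/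
open MeasureTheory ProbabilityTheory

noncomputable section

variable {Ω : Type*} [MeasurableSpace Ω]

/-! Since `F(Y−) ≤ Z_F ≤ F(Y)` whenever `U ∈ [0,1]`, the event `Z_F < α` forces `F(Y−) < α` and
hence `Y ≤ q_α^-(F)`, while `Z_F > α` forces `F(Y) > α` and hence `Y ≥ q_α^+(F)`. Uniformity of
`Z_F` gives these two events probabilities `α` and `1 − α`. -/

open Set

section CDF

variable (G : Measure ℝ)

lemma cdfLt_le_cdfAt [IsFiniteMeasure G] (y : ℝ) : cdfLt G y ≤ cdfAt G y :=
  ENNReal.toReal_mono (measure_ne_top G _) (measure_mono Iio_subset_Iic_self)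

lemma cdfAt_le_cdfLt_of_lt [IsFiniteMeasure G] {x y : ℝ} (h : x < y) : cdfAt G x ≤ cdfLt G y :=
  ENNReal.toReal_mono (measure_ne_top G _) (measure_mono (Iic_subset_Iio.2 h))

lemma cdfAt_eq_cdf [IsProbabilityMeasure G] (x : ℝ) : cdfAt G x = cdf G x := by
  rw [cdf_eq_real, measureReal_def, cdfAt]

lemma exists_lt_cdfAt [IsProbabilityMeasure G] {α : ℝ} (hα : α < 1) : ∃ x, α < cdfAt G x := by
  simp only [cdfAt_eq_cdf]
  exact ((tendsto_cdf_atTop G).eventually (lt_mem_nhds hα)).exists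

lemma exists_cdfLt_lt [IsProbabilityMeasure G] {α : ℝ} (hα : 0 < α) : ∃ x, cdfLt G x < α := by
  obtain ⟨x, hx⟩ := ((tendsto_cdf_atBot G).eventually (gt_mem_nhds hα)).exists
  exact ⟨x, (cdfLt_le_cdfAt G x).trans_lt (by rwa [cdfAt_eq_cdf])⟩

variable {G}

lemma le_lowerQuantile_of_cdfLt_lt [IsProbabilityMeasure G] {α y : ℝ} (hα : α < 1)
    (h : cdfLt G y < α) : y ≤ lowerQuantile G α := by
  obtain ⟨x₀, hx₀⟩ := exists_lt_cdfAt G hα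
  refine le_csInf ⟨x₀, hx₀.le⟩ fun x hx => ?_
  by_contra! hxy
  exact (hx.trans (cdfAt_le_cdfLt_of_lt G hxy)).not_gt h

lemma upperQuantile_le_of_lt_cdfAt [IsProbabilityMeasure G] {α y : ℝ} (hα : 0 < α)
    (h : α < cdfAt G y) : upperQuantile G α ≤ y := by
  obtain ⟨x₀, hx₀⟩ := exists_cdfLt_lt G hα
  refine csSup_le ⟨x₀, hx₀.le⟩ fun x hx => ?_
  by_contra! hxy
  exact ((cdfAt_le_cdfLt_of_lt G hxy).trans hx).not_gt h

end CDF

section PIT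

variable {Ω : Type*} {F : Ω → Measure ℝ} {Y U : Ω → ℝ} {ω : Ω} [IsFiniteMeasure (F ω)]

lemma cdfLt_le_PIT (hU : 0 ≤ U ω) : cdfLt (F ω) (Y ω) ≤ PIT F Y U ω :=
  le_add_of_nonneg_right (mul_nonneg hU (sub_nonneg.2 (cdfLt_le_cdfAt _ _)))

lemma PIT_le_cdfAt (hU : U ω ≤ 1) : PIT F Y U ω ≤ cdfAt (F ω) (Y ω) := by
  have := mul_le_of_le_one_left (sub_nonneg.2 (cdfLt_le_cdfAt (F ω) (Y ω))) hU
  rw [PIT]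
  linarith

end PIT

section Uniform

lemma unif01_Iio {α : ℝ} (hα : α ≤ 1) : unif01 (Iio α) = ENNReal.ofReal α := by
  have hset : Iio α ∩ Icc 0 1 = Ico 0 α := by
    ext x; simp only [mem_inter_iff, mem_Iio, mem_Icc, mem_Ico]; grind
  rw [unif01, Measure.restrict_apply measurableSet_Iio, hset, Real.volume_Ico, sub_zero]

lemma unif01_Ioi {α : ℝ} (hα : 0 ≤ α) : unif01 (Ioi α) = ENNReal.ofReal (1 - α) := by
  have hset : Ioi α ∩ Icc 0 1 = Ioc α 1 := by
    ext x; simp only [mem_inter_iff, mem_Ioi, mem_Icc, mem_Ioc]; grind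
  rw [unif01, Measure.restrict_apply measurableSet_Ioi, hset, Real.volume_Ioc]

instance isProbabilityMeasure_unif01 : IsProbabilityMeasure unif01 :=
  ⟨by simp [unif01, Real.volume_Icc]⟩

variable {Ω : Type*} [MeasurableSpace Ω] {μ : Measure Ω} {Z : Ω → ℝ}

lemma aemeasurable_of_map_eq_unif01 (hZ : μ.map Z = unif01) : AEMeasurable Z μ :=
  .of_map_ne_zero (hZ ▸ IsProbabilityMeasure.ne_zero _)

lemma ae_mem_Icc_of_map_eq_unif01 (hZ : μ.map Z = unif01) : ∀ᵐ ω ∂μ, Z ω ∈ Icc 0 1 :=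
  ae_of_ae_map (aemeasurable_of_map_eq_unif01 hZ) (hZ ▸ ae_restrict_mem measurableSet_Icc)

lemma measure_preimage_Iio_of_map_eq_unif01 (hZ : μ.map Z = unif01) {α : ℝ} (hα : α ≤ 1) :
    μ (Z ⁻¹' Iio α) = ENNReal.ofReal α := by
  rw [← Measure.map_apply_of_aemeasurable (aemeasurable_of_map_eq_unif01 hZ) measurableSet_Iio,
    hZ, unif01_Iio hα]

lemma measure_preimage_Ioi_of_map_eq_unif01 (hZ : μ.map Z = unif01) {α : ℝ} (hα : 0 ≤ α) :
    μ (Z ⁻¹' Ioi α) = ENNReal.ofReal (1 - α) := by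
  rw [← Measure.map_apply_of_aemeasurable (aemeasurable_of_map_eq_unif01 hZ) measurableSet_Ioi,
    hZ, unif01_Ioi hα]

end Uniform

/-- **Theorem (Statement 18).** In a prediction space, probabilistic calibration implies
unconditional quantile calibration at every level `α ∈ (0,1)`:
`Q(Y ≤ q_α^-(F)) ≥ α` and `Q(Y ≥ q_α^+(F)) ≥ 1 − α`. -/
theorem prob_calibration_implies_uncond_quantile_calibration
    {Ω : Type*} [MeasurableSpace Ω] (μ : Measure Ω) (F : Ω → Measure ℝ) (Y U : Ω → ℝ)
    (hps : IsPredictionSpace μ F Y U)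
    (hpc : ProbCalibrated μ F Y U) :
    ∀ α ∈ Set.Ioo (0:ℝ) 1,
      α ≤ (μ {ω | Y ω ≤ lowerQuantile (F ω) α}).toReal ∧
      1 - α ≤ (μ {ω | upperQuantile (F ω) α ≤ Y ω}).toReal := by
  rintro α ⟨hα0, hα1⟩
  have := hps.isProb
  have := hps.probF
  have hU : ∀ᵐ ω ∂μ, U ω ∈ Icc 0 1 := ae_mem_Icc_of_map_eq_unif01 hps.unifU
  constructor
  · rw [← ENNReal.ofReal_le_iff_le_toReal (measure_ne_top _ _),
      ← measure_preimage_Iio_of_map_eq_unif01 hpc hα1.le]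
    refine measure_mono_ae (hU.mono fun ω hUω hZ => ?_)
    exact le_lowerQuantile_of_cdfLt_lt hα1 ((cdfLt_le_PIT hUω.1).trans_lt hZ)
  · rw [← ENNReal.ofReal_le_iff_le_toReal (measure_ne_top _ _),
      ← measure_preimage_Ioi_of_map_eq_unif01 hpc hα0.le]
    refine measure_mono_ae (hU.mono fun ω hUω hZ => ?_)
    exact upperQuantile_le_of_lt_cdfAt hα0 (hZ.trans_le (PIT_le_cdfAt hUω.2))

end
end
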